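/- arXiv:1109.6811 — 7 statements merged into one kernel-verified Lean document; each statement's English description precedes it below -/
import Mathlib

section
/- Let f: ℝ₊ → ℝ be continuously differentiable and suppose there exists K ≥ 0 such that |f(y) − y·f'(y)| ≤ K for all y ≥ 0. Then for all a, b, t > 0 with a ≠ b, one has |(b·f(a·t) − a·f(b·t))/(b − a)| ≤ K. -/
/-!
With `g x = f (x t) / x` one has `g' x = -(f (x t) - x t f'(x t)) / x²`, so the hypothesis gives
`|g'| ≤ K / x² = (-K / x)'`. Comparing `g` with `-K / x` bounds `|g a - g b|` by `K |1/a - 1/b|`,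
and the quotient in the theorem is exactly `(a b / (b - a)) (g a - g b)`.
-/

open Set

theorem abs_sub_le_sub_of_abs_deriv_le_deriv {g g' B B' : ℝ → ℝ} {a b : ℝ} (hab : a ≤ b)
    (hg : ∀ x ∈ Icc a b, HasDerivAt g (g' x) x) (hB : ∀ x ∈ Icc a b, HasDerivAt B (B' x) x)
    (bound : ∀ x ∈ Icc a b, |g' x| ≤ B' x) : |g b - g a| ≤ B b - B a := by
  have hg_sub (x : ℝ) (hx : x ∈ Icc a b) : HasDerivAt (fun y => g y - g a) (g' x) x :=
    (hg x hx).sub_const (g a)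
  have hB_sub (x : ℝ) (hx : x ∈ Icc a b) : HasDerivAt (fun y => B y - B a) (B' x) x :=
    (hB x hx).sub_const (B a)
  refine image_norm_le_of_norm_deriv_right_le_deriv_boundary' (f := fun y => g y - g a)
    (fun x hx => (hg_sub x hx).continuousAt.continuousWithinAt)
    (fun x hx => (hg_sub x (Ico_subset_Icc_self hx)).hasDerivWithinAt) (by simp)
    (fun x hx => (hB_sub x hx).continuousAt.continuousWithinAt)
    (fun x hx => (hB_sub x (Ico_subset_Icc_self hx)).hasDerivWithinAt)
    (fun x hx => bound x (Ico_subset_Icc_self hx)) (right_mem_Icc.2 hab)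

theorem HasDerivAt.comp_mul_const_div_self {f : ℝ → ℝ} {f' x t : ℝ}
    (hf : HasDerivAt f f' (x * t)) (hx : x ≠ 0) :
    HasDerivAt (fun x => f (x * t) / x) (-(f (x * t) - x * t * f') / x ^ 2) x := by
  have hcomp : HasDerivAt (fun x => f (x * t)) (f' * t) x := by
    simpa [Function.comp_def] using hf.comp x ((hasDerivAt_id x).mul_const t)
  exact (hcomp.div (hasDerivAt_id' x) hx).congr_deriv (by ring)

theorem abs_div_sub_div_le {f : ℝ → ℝ} (hf : DifferentiableOn ℝ f (Ioi 0)) {K : ℝ}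
    (hK : ∀ y, 0 < y → |f y - y * deriv f y| ≤ K) {a b t : ℝ} (ha : 0 < a) (hb : 0 < b)
    (ht : 0 < t) : |f (a * t) / a - f (b * t) / b| ≤ K * |a⁻¹ - b⁻¹| := by
  wlog hab : a ≤ b generalizing a b
  · rw [abs_sub_comm, abs_sub_comm a⁻¹]
    exact this hb ha (le_of_not_ge hab)
  have hpos {x : ℝ} (hx : x ∈ Icc a b) : 0 < x := ha.trans_le hx.1
  have hderiv (x : ℝ) (hx : x ∈ Icc a b) := HasDerivAt.comp_mul_const_div_self
    ((hf.differentiableAt (Ioi_mem_nhds (mul_pos (hpos hx) ht))).hasDerivAt) (hpos hx).ne'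
  have hbound := abs_sub_le_sub_of_abs_deriv_le_deriv (B := fun x => -K * x⁻¹)
    (B' := fun x => K / x ^ 2) hab hderiv
    (fun x hx => ((hasDerivAt_inv (hpos hx).ne').const_mul (-K)).congr_deriv (by ring))
    (fun x hx => by
      rw [abs_div, abs_neg, abs_of_pos (pow_pos (hpos hx) 2)]
      exact div_le_div_of_nonneg_right (hK _ (mul_pos (hpos hx) ht)) (sq_nonneg x))
  rw [abs_sub_comm, abs_of_nonneg (sub_nonneg.2 (inv_anti₀ ha hab))]
  convert hbound using 1
  ring

theorem stmt_1_general (f : ℝ → ℝ) (hf : ContDiff ℝ 1 f) (K : ℝ)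
    (hK : ∀ y : ℝ, 0 ≤ y → |f y - y * deriv f y| ≤ K)
    (a b t : ℝ) (ha : 0 < a) (hb : 0 < b) (ht : 0 < t) (hab : a ≠ b) :
    |(b * f (a * t) - a * f (b * t)) / (b - a)| ≤ K := by
  have hba : b - a ≠ 0 := sub_ne_zero.2 hab.symm
  have hquot : (b * f (a * t) - a * f (b * t)) / (b - a)
      = a * b / (b - a) * (f (a * t) / a - f (b * t) / b) := by field_simp
  have hinv : |a * b / (b - a)| * |a⁻¹ - b⁻¹| = 1 := by
    rw [← abs_mul, show a * b / (b - a) * (a⁻¹ - b⁻¹) = 1 by field_simp, abs_one]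
  have hbound := abs_div_sub_div_le (hf.differentiable one_ne_zero).differentiableOn
    (fun y hy => hK y hy.le) ha hb ht
  calc |(b * f (a * t) - a * f (b * t)) / (b - a)|
      = |a * b / (b - a)| * |f (a * t) / a - f (b * t) / b| := by rw [hquot, abs_mul]
    _ ≤ |a * b / (b - a)| * (K * |a⁻¹ - b⁻¹|) := by gcongr
    _ = K := by rw [mul_left_comm, hinv, mul_one]

/-- Proposition A.2 (second part): if `|f(y) - y f'(y)| ≤ K` for all `y ≥ 0`, then
`|(b f(at) - a f(bt))/(b-a)| ≤ K` for all positive `a ≠ b` and `t > 0`. -/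
theorem stmt_1 (f : ℝ → ℝ) (hf : ContDiff ℝ 1 f) (K : ℝ) (hK0 : 0 ≤ K)
    (hK : ∀ y : ℝ, 0 ≤ y → |f y - y * deriv f y| ≤ K)
    (a b t : ℝ) (ha : 0 < a) (hb : 0 < b) (ht : 0 < t) (hab : a ≠ b) :
    |(b * f (a * t) - a * f (b * t)) / (b - a)| ≤ K :=
  stmt_1_general f hf K hK a b t ha hb ht hab
end

section
/- Let F : ℝ → ℝ be measurable with |F(s)| ≤ K·e^{−b|s|} for constants K > 0, b ≥ 0, and let a > 0. Define 𝒦(t−t') = ∫_{-∞}^t ∫_{-∞}^{t'} F(s−s')e^{−a(t+t'−s−s')} ds' ds. Then for every δ ≥ 0, |𝒦(δ) − 𝒦(0)| ≤ 5K·(1 ∧ aδ)/(a(a+b)). -/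
open MeasureTheory Set Real

lemma integrableOn_exp_mul_Iic' {c : ℝ} (hc : 0 < c) (t : ℝ) :
    IntegrableOn (fun s : ℝ => Real.exp (c * s)) (Set.Iic t) := by
  have h1 : Integrable ((Set.Iic (c * t)).indicator Real.exp) :=
    (integrableOn_exp_Iic (c * t)).integrable_indicator measurableSet_Iic
  have h2 : Integrable (fun x : ℝ => (Set.Iic (c * t)).indicator Real.exp (c * x)) :=
    h1.comp_mul_left' hc.ne'
  have h3 : (fun x : ℝ => (Set.Iic (c * t)).indicator Real.exp (c * x))
      = (Set.Iic t).indicator (fun s => Real.exp (c * s)) := by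
    funext x
    by_cases hx : x ≤ t
    · rw [Set.indicator_of_mem (Set.mem_Iic.2 hx),
        Set.indicator_of_mem (Set.mem_Iic.2 (by nlinarith))]
    · rw [Set.indicator_of_notMem (fun h => hx (Set.mem_Iic.1 h)),
        Set.indicator_of_notMem (fun h => hx ?_)]
      have := Set.mem_Iic.1 h
      nlinarith
  rw [h3] at h2
  exact (integrable_indicator_iff measurableSet_Iic).1 h2

lemma integral_exp_mul_Iic' {c : ℝ} (hc : 0 < c) (t : ℝ) :
    ∫ s in Set.Iic t, Real.exp (c * s) = Real.exp (c * t) / c := by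
  have h := integral_comp_neg_Iic t (fun x => Real.exp (-(c * x)))
  simp only [mul_neg, neg_neg] at h
  rw [h, integral_comp_mul_left_Ioi (fun y => Real.exp (-y)) (-t) hc]
  rw [integral_exp_neg_Ioi]
  rw [smul_eq_mul, mul_neg, neg_neg]
  ring

lemma integral_exp_mul_Ioc {d : ℝ} (hd : d ≠ 0) {s t : ℝ} (hst : s ≤ t) :
    ∫ x in Set.Ioc s t, Real.exp (d * x) = (Real.exp (d * t) - Real.exp (d * s)) / d := by
  rw [← intervalIntegral.integral_of_le hst,
    intervalIntegral.integral_comp_mul_left (fun u => Real.exp u) hd,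
    integral_exp, smul_eq_mul]
  field_simp

lemma abs_setIntegral_le {f φ : ℝ → ℝ} {s : Set ℝ} (hs : MeasurableSet s)
    (hφ : IntegrableOn φ s) (h : ∀ x ∈ s, |f x| ≤ φ x) :
    |∫ x in s, f x| ≤ ∫ x in s, φ x := by
  calc |∫ x in s, f x| ≤ ∫ x in s, ‖f x‖ := by
        simpa using norm_integral_le_integral_norm (μ := volume.restrict s) f
    _ ≤ ∫ x in s, φ x := by
        refine integral_mono_of_nonneg (Filter.Eventually.of_forall fun x => norm_nonneg _) hφ ?_
        rw [Filter.EventuallyLE, ae_restrict_iff' hs]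
        filter_upwards with x hx
        simpa [Real.norm_eq_abs] using h x hx

/-- The kernel `𝒦(δ) = ∫_{-∞}^δ ∫_{-∞}^0 F(s-s') e^{-a(δ-s-s')} ds' ds` of Lemma A.6. -/
noncomputable def kernelK (F : ℝ → ℝ) (a δ : ℝ) : ℝ :=
  ∫ s in Set.Iic δ, ∫ s' in Set.Iic (0 : ℝ), F (s - s') * Real.exp (-a * (δ - s - s'))

/-- Lemma A.6: if `|F(s)| ≤ K e^{-b|s|}` then
`|𝒦(δ) - 𝒦(0)| ≤ 5K (1 ∧ aδ)/(a(a+b))` for every `δ ≥ 0`. -/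
theorem stmt_6 (F : ℝ → ℝ) (hFmeas : Measurable F) (K a b : ℝ)
    (hK : 0 < K) (ha : 0 < a) (hb : 0 ≤ b)
    (hF : ∀ s : ℝ, |F s| ≤ K * Real.exp (-b * |s|)) :
    ∀ δ : ℝ, 0 ≤ δ →
      |kernelK F a δ - kernelK F a 0| ≤ 5 * K * min 1 (a * δ) / (a * (a + b)) := by
  intro δ hδ
  have hab : 0 < a + b := by linarith
  set g : ℝ → ℝ := fun s => ∫ s' in Set.Iic (0 : ℝ), F (s - s') * Real.exp (a * s') with hgdef
  -- measurability of the inner integrand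
  have hmeas : ∀ s : ℝ, Measurable fun s' : ℝ => F (s - s') * Real.exp (a * s') := fun s =>
    (hFmeas.comp (measurable_const.sub measurable_id)).mul (measurable_id.const_mul a).exp
  -- pointwise bound on the inner integrand
  have hFb : ∀ s s' : ℝ, |F (s - s') * Real.exp (a * s')|
      ≤ K * Real.exp (-b * |s - s'|) * Real.exp (a * s') := by
    intro s s'
    rw [abs_mul, abs_of_pos (Real.exp_pos _)]
    exact mul_le_mul_of_nonneg_right (hF _) (Real.exp_pos _).le
  have hFb' : ∀ s s' : ℝ, |F (s - s') * Real.exp (a * s')| ≤ K * Real.exp (a * s') := by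
    intro s s'
    refine (hFb s s').trans ?_
    have h1 : Real.exp (-b * |s - s'|) ≤ 1 := Real.exp_le_one_iff.2 (by nlinarith [abs_nonneg (s - s')])
    nlinarith [mul_nonneg (mul_nonneg hK.le (Real.exp_pos (a * s')).le) (sub_nonneg.2 h1)]
  -- integrability of the inner integrand
  have hInt' : ∀ s : ℝ, IntegrableOn (fun s' => F (s - s') * Real.exp (a * s')) (Set.Iic (0:ℝ)) := by
    intro s
    refine Integrable.mono' ((integrableOn_exp_mul_Iic ha 0).const_mul K)
      (hmeas s).aestronglyMeasurable.restrict ?_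
    filter_upwards with s'
    rw [Real.norm_eq_abs]; exact hFb' s s'
  -- uniform bound |g s| ≤ K / a
  have hgbound : ∀ s : ℝ, |g s| ≤ K / a := by
    intro s
    have := abs_setIntegral_le (f := fun s' => F (s - s') * Real.exp (a * s'))
      (φ := fun s' => K * Real.exp (a * s')) measurableSet_Iic
      ((integrableOn_exp_mul_Iic ha 0).const_mul K) (fun s' _ => hFb' s s')
    rw [integral_const_mul, integral_exp_mul_Iic ha 0] at this
    simpa [hgdef, mul_zero, Real.exp_zero, div_eq_mul_inv] using this
  -- bound for s ≥ 0 : |g s| ≤ K / (a+b)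
  have hgpos : ∀ s : ℝ, 0 ≤ s → |g s| ≤ K / (a + b) := by
    intro s hs
    have hbd : ∀ x ∈ Set.Iic (0:ℝ), |F (s - x) * Real.exp (a * x)|
        ≤ K * Real.exp (-(b * s)) * Real.exp ((a + b) * x) := by
      intro x hx
      refine (hFb s x).trans (le_of_eq ?_)
      have hxs : x ≤ s := le_trans (Set.mem_Iic.1 hx) hs
      rw [abs_of_nonneg (by linarith : (0:ℝ) ≤ s - x)]
      rw [mul_assoc, mul_assoc, ← Real.exp_add, ← Real.exp_add]
      ring_nf
    have := abs_setIntegral_le measurableSet_Iic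
      ((integrableOn_exp_mul_Iic hab 0).const_mul (K * Real.exp (-(b * s)))) hbd
    rw [integral_const_mul, integral_exp_mul_Iic hab 0] at this
    refine this.trans ?_
    rw [mul_zero, Real.exp_zero]
    calc K * Real.exp (-(b * s)) * (1 / (a + b)) ≤ K * 1 * (1 / (a + b)) := by
          gcongr
          exact Real.exp_le_one_iff.2 (by nlinarith)
      _ = K / (a + b) := by ring
  -- strong measurability of g
  have hgmeas : StronglyMeasurable g := by
    rw [hgdef]
    exact MeasureTheory.StronglyMeasurable.integral_prod_right'
      (f := fun p : ℝ × ℝ => F (p.1 - p.2) * Real.exp (a * p.2))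
      (((hFmeas.comp (measurable_fst.sub measurable_snd)).mul
        ((measurable_snd.const_mul a).exp)).stronglyMeasurable)
  set H : ℝ → ℝ := fun s => Real.exp (a * s) * g s with hHdef
  have hHmeas : AEStronglyMeasurable H volume :=
    (((measurable_id.const_mul a).exp).stronglyMeasurable.mul hgmeas).aestronglyMeasurable
  have hHint : ∀ t : ℝ, IntegrableOn H (Set.Iic t) := by
    intro t
    refine Integrable.mono' ((integrableOn_exp_mul_Iic ha t).const_mul (K / a))
      hHmeas.restrict ?_
    filter_upwards with s
    rw [Real.norm_eq_abs, hHdef]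
    simp only
    rw [abs_mul, abs_of_pos (Real.exp_pos _)]
    calc Real.exp (a*s) * |g s| ≤ Real.exp (a*s) * (K/a) := by
          gcongr
          exact hgbound s
      _ = K/a * Real.exp (a*s) := by ring
  -- the kernel in terms of H
  have key : ∀ t : ℝ, kernelK F a t = Real.exp (-(a * t)) * ∫ s in Set.Iic t, H s := by
    intro t
    rw [kernelK, ← integral_const_mul]
    refine setIntegral_congr_fun measurableSet_Iic fun s _ => ?_
    rw [hHdef]
    simp only
    rw [show Real.exp (-(a*t)) * (Real.exp (a*s) * g s)
        = ∫ s' in Set.Iic (0:ℝ),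
            Real.exp (-(a*t)) * (Real.exp (a*s) * (F (s - s') * Real.exp (a * s'))) from by
      rw [integral_const_mul, integral_const_mul, hgdef]]
    refine setIntegral_congr_fun measurableSet_Iic fun s' _ => ?_
    rw [show -a * (t - s - s') = -(a*t) + (a*s + a*s') by ring, Real.exp_add, Real.exp_add]
    ring
  have hA0 : kernelK F a 0 = ∫ s in Set.Iic (0:ℝ), H s := by
    rw [key 0]
    simp
  have hsplit : ∫ s in Set.Iic δ, H s
      = (∫ s in Set.Iic (0:ℝ), H s) + ∫ s in Set.Ioc (0:ℝ) δ, H s := by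
    rw [← Set.Iic_union_Ioc_eq_Iic hδ]
    exact setIntegral_union (Set.Iic_disjoint_Ioc le_rfl) measurableSet_Ioc
      (hHint 0) ((hHint δ).mono_set Set.Ioc_subset_Iic_self)
  -- bound on the Ioc part
  have hB : |∫ s in Set.Ioc (0:ℝ) δ, H s| ≤ K/(a+b) * ((Real.exp (a*δ) - 1)/a) := by
    have hbd : ∀ x ∈ Set.Ioc (0:ℝ) δ, |H x| ≤ K/(a+b) * Real.exp (a * x) := by
      intro x hx
      rw [hHdef]
      simp only
      rw [abs_mul, abs_of_pos (Real.exp_pos _)]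
      calc Real.exp (a*x) * |g x| ≤ Real.exp (a*x) * (K/(a+b)) := by
            gcongr
            exact hgpos x hx.1.le
        _ = K/(a+b) * Real.exp (a*x) := by ring
    have := abs_setIntegral_le measurableSet_Ioc
      (((by fun_prop : Continuous fun x : ℝ => Real.exp (a * x)).integrableOn_Ioc).const_mul
        (K/(a+b))) hbd
    rw [integral_const_mul, integral_exp_mul_Ioc ha.ne' hδ] at this
    simpa [mul_zero, Real.exp_zero] using this
  -- bound for the Ioc s 0 piece of g, s ≤ 0
  obtain ⟨c, hc, hbc, hc2⟩ : ∃ c : ℝ, 0 < c ∧ b ≤ c ∧ ∀ s : ℝ, s ≤ 0 →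
      |∫ s' in Set.Ioc s (0:ℝ), F (s - s') * Real.exp (a * s')|
        ≤ K * ((1 - Real.exp (c * s))/c) := by
    rcases eq_or_lt_of_le hb with hb0 | hb0
    · refine ⟨a, ha, by linarith, fun s hs => ?_⟩
      have hbd : ∀ x ∈ Set.Ioc s (0:ℝ), |F (s - x) * Real.exp (a * x)| ≤ K * Real.exp (a * x) :=
        fun x _ => hFb' s x
      have := abs_setIntegral_le measurableSet_Ioc
        (((by fun_prop : Continuous fun x : ℝ => Real.exp (a * x)).integrableOn_Ioc).const_mul
          K) hbd
      rw [integral_const_mul, integral_exp_mul_Ioc ha.ne' hs] at this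
      refine this.trans (le_of_eq ?_)
      rw [mul_zero, Real.exp_zero]
    · refine ⟨b, hb0, le_rfl, fun s hs => ?_⟩
      have hbd : ∀ x ∈ Set.Ioc s (0:ℝ), |F (s - x) * Real.exp (a * x)|
          ≤ (K * Real.exp (b*s)) * Real.exp (-b * x) := by
        intro x hx
        refine (hFb s x).trans ?_
        rw [abs_of_nonpos (by linarith [hx.1] : s - x ≤ 0)]
        rw [show Real.exp (-b * -(s - x)) = Real.exp (b*s) * Real.exp (-b*x) from by
          rw [← Real.exp_add]; congr 1; ring]
        have h2 : Real.exp (a * x) ≤ 1 := Real.exp_le_one_iff.2 (by nlinarith [hx.2])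
        calc K * (Real.exp (b*s) * Real.exp (-b*x)) * Real.exp (a*x)
            ≤ K * (Real.exp (b*s) * Real.exp (-b*x)) * 1 := by
              gcongr
          _ = K * Real.exp (b*s) * Real.exp (-b*x) := by ring
      have := abs_setIntegral_le measurableSet_Ioc
        (((by fun_prop : Continuous fun x : ℝ => Real.exp (-b * x)).integrableOn_Ioc).const_mul
          (K * Real.exp (b*s))) hbd
      rw [integral_const_mul, integral_exp_mul_Ioc (neg_ne_zero.2 hb0.ne') hs] at this
      refine this.trans (le_of_eq ?_)
      have h3 : Real.exp (b*s) * Real.exp (-b*s) = 1 := by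
        rw [← Real.exp_add, show b*s + -b*s = 0 by ring, Real.exp_zero]
      rw [mul_zero, Real.exp_zero, show -b*s = -(b*s) by ring, Real.exp_neg]
      have hX : Real.exp (b*s) ≠ 0 := (Real.exp_pos _).ne'
      field_simp
      ring
  have hac : 0 < a + c := by linarith
  -- bound |g s| for s ≤ 0
  have hgneg : ∀ s : ℝ, s ≤ 0 →
      |g s| ≤ K * Real.exp (a*s)/(a+b) + K * ((1 - Real.exp (c*s))/c) := by
    intro s hs
    have hsplitg : g s = (∫ s' in Set.Iic s, F (s - s') * Real.exp (a * s'))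
        + ∫ s' in Set.Ioc s (0:ℝ), F (s - s') * Real.exp (a * s') := by
      rw [hgdef]
      simp only
      rw [← Set.Iic_union_Ioc_eq_Iic hs]
      exact setIntegral_union (Set.Iic_disjoint_Ioc le_rfl) measurableSet_Ioc
        ((hInt' s).mono_set (Set.Iic_subset_Iic.2 hs)) ((hInt' s).mono_set Set.Ioc_subset_Iic_self)
    rw [hsplitg]
    refine (abs_add_le _ _).trans (add_le_add ?_ (hc2 s hs))
    have hbd : ∀ x ∈ Set.Iic s, |F (s - x) * Real.exp (a * x)|
        ≤ (K * Real.exp (-(b*s))) * Real.exp ((a+b) * x) := by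
      intro x hx
      refine (hFb s x).trans (le_of_eq ?_)
      rw [abs_of_nonneg (by linarith [Set.mem_Iic.1 hx] : (0:ℝ) ≤ s - x)]
      rw [mul_assoc, mul_assoc, ← Real.exp_add, ← Real.exp_add]
      congr 2
      ring
    have := abs_setIntegral_le measurableSet_Iic
      ((integrableOn_exp_mul_Iic hab s).const_mul (K * Real.exp (-(b*s)))) hbd
    rw [integral_const_mul, integral_exp_mul_Iic hab s] at this
    refine this.trans (le_of_eq ?_)
    have h3 : Real.exp (-(b*s)) * Real.exp ((a+b)*s) = Real.exp (a*s) := by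
      rw [← Real.exp_add]; congr 1; ring
    rw [← h3]
    ring
  -- bound on the Iic 0 part
  have hA : |∫ s in Set.Iic (0:ℝ), H s| ≤ 2 * K / (a * (a+b)) := by
    have haa : (0:ℝ) < a + a := by linarith
    have hφ1 : IntegrableOn (fun s : ℝ => K/(a+b) * Real.exp ((a+a)*s)) (Set.Iic (0:ℝ)) :=
      (integrableOn_exp_mul_Iic haa 0).const_mul _
    have hφ2 : IntegrableOn (fun s : ℝ => K/c * Real.exp (a*s)) (Set.Iic (0:ℝ)) :=
      (integrableOn_exp_mul_Iic ha 0).const_mul _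
    have hφ3 : IntegrableOn (fun s : ℝ => K/c * Real.exp ((a+c)*s)) (Set.Iic (0:ℝ)) :=
      (integrableOn_exp_mul_Iic hac 0).const_mul _
    have hφ23 : IntegrableOn
        (fun x : ℝ => K/c * Real.exp (a*x) - K/c * Real.exp ((a+c)*x)) (Set.Iic (0:ℝ)) :=
      hφ2.sub hφ3
    have hφ : IntegrableOn (fun x : ℝ => K/(a+b) * Real.exp ((a+a)*x)
        + (K/c * Real.exp (a*x) - K/c * Real.exp ((a+c)*x))) (Set.Iic (0:ℝ)) := hφ1.add hφ23
    have hbd : ∀ x ∈ Set.Iic (0:ℝ), |H x| ≤ K/(a+b) * Real.exp ((a+a)*x)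
        + (K/c * Real.exp (a*x) - K/c * Real.exp ((a+c)*x)) := by
      intro x hx
      rw [hHdef]
      simp only
      rw [abs_mul, abs_of_pos (Real.exp_pos _)]
      have e1 : Real.exp (a*x) * (K * Real.exp (a*x)/(a+b)) = K/(a+b) * Real.exp ((a+a)*x) := by
        rw [show (a+a)*x = a*x + a*x by ring, Real.exp_add]; ring
      have e2 : Real.exp (a*x) * (K * ((1 - Real.exp (c*x))/c))
          = K/c * Real.exp (a*x) - K/c * Real.exp ((a+c)*x) := by
        rw [show (a+c)*x = a*x + c*x by ring, Real.exp_add]; ring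
      calc Real.exp (a*x) * |g x|
          ≤ Real.exp (a*x) * (K * Real.exp (a*x)/(a+b) + K * ((1 - Real.exp (c*x))/c)) := by
            gcongr
            exact hgneg x hx
        _ = _ := by rw [mul_add, e1, e2]
    have habs := abs_setIntegral_le measurableSet_Iic hφ hbd
    have hval : (∫ x in Set.Iic (0:ℝ), (K/(a+b) * Real.exp ((a+a)*x)
          + (K/c * Real.exp (a*x) - K/c * Real.exp ((a+c)*x))))
        = K/(a+b) * (1/(a+a)) + (K/c * (1/a) - K/c * (1/(a+c))) := by
      rw [integral_add hφ1 hφ23, integral_sub hφ2 hφ3,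
        integral_const_mul, integral_const_mul, integral_const_mul,
        integral_exp_mul_Iic haa 0, integral_exp_mul_Iic ha 0, integral_exp_mul_Iic hac 0]
      simp [mul_zero, Real.exp_zero]
    rw [hval] at habs
    refine habs.trans ?_
    have h2 : K/c * (1/a) - K/c * (1/(a+c)) = K * (1/(a*(a+c))) := by
      rw [one_div, one_div, one_div, mul_inv]
      field_simp
      ring
    have h3 : K * (1/(a*(a+c))) ≤ K * (1/(a*(a+b))) :=
      mul_le_mul_of_nonneg_left
        (one_div_le_one_div_of_le (mul_pos ha hab) (by nlinarith)) hK.le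
    have h4 : K/(a+b) * (1/(a+a)) ≤ K * (1/(a*(a+b))) := by
      rw [show K/(a+b) * (1/(a+a)) = K * (1/((a+b)*(a+a))) from by
        rw [one_div, one_div, mul_inv]; ring]
      exact mul_le_mul_of_nonneg_left
        (one_div_le_one_div_of_le (mul_pos ha hab) (by nlinarith)) hK.le
    rw [h2]
    calc K/(a+b) * (1/(a+a)) + K * (1/(a*(a+c)))
        ≤ K * (1/(a*(a+b))) + K * (1/(a*(a+b))) := add_le_add h4 h3
      _ = 2 * K / (a*(a+b)) := by ring
  -- final assembly
  set E := Real.exp (-(a*δ)) with hEdef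
  have hE0 : 0 < E := Real.exp_pos _
  have hE1 : E ≤ 1 := Real.exp_le_one_iff.2 (by nlinarith)
  have hEB : E * (Real.exp (a*δ) - 1) = 1 - E := by
    rw [hEdef, mul_sub, ← Real.exp_add, show -(a*δ) + a*δ = 0 by ring, Real.exp_zero]
    ring
  have hdiff : kernelK F a δ - kernelK F a 0
      = (E - 1) * (∫ s in Set.Iic (0:ℝ), H s) + E * ∫ s in Set.Ioc (0:ℝ) δ, H s := by
    rw [key δ, hA0, hsplit]
    ring
  rw [hdiff]
  have hmin : 1 - E ≤ min 1 (a*δ) :=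
    le_min (by linarith) (by nlinarith [Real.add_one_le_exp (-(a*δ))])
  have hm0 : 0 ≤ min 1 (a*δ) := le_min zero_le_one (mul_nonneg ha.le hδ)
  calc |(E - 1) * (∫ s in Set.Iic (0:ℝ), H s) + E * ∫ s in Set.Ioc (0:ℝ) δ, H s|
      ≤ (1 - E) * |∫ s in Set.Iic (0:ℝ), H s| + E * |∫ s in Set.Ioc (0:ℝ) δ, H s| := by
        refine (abs_add_le _ _).trans ?_
        rw [abs_mul, abs_mul, abs_of_pos hE0, abs_of_nonpos (by linarith : E - 1 ≤ 0), neg_sub]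
    _ ≤ (1 - E) * (2 * K / (a*(a+b))) + E * (K/(a+b) * ((Real.exp (a*δ) - 1)/a)) :=
        add_le_add (mul_le_mul_of_nonneg_left hA (by linarith))
          (mul_le_mul_of_nonneg_left hB hE0.le)
    _ = (2 * K / (a*(a+b))) * (1 - E) + (K / (a*(a+b))) * (E * (Real.exp (a*δ) - 1)) := by
        have hane : a ≠ 0 := ha.ne'
        have habne : a + b ≠ 0 := hab.ne'
        field_simp
    _ = 3 * K / (a*(a+b)) * (1 - E) := by rw [hEB]; ring
    _ ≤ 3 * K / (a*(a+b)) * min 1 (a*δ) :=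
        mul_le_mul_of_nonneg_left hmin (by positivity)
    _ = 3 * K * min 1 (a*δ) / (a*(a+b)) := by ring
    _ ≤ 5 * K * min 1 (a*δ) / (a*(a+b)) := by
        gcongr
        norm_num
end

section
/- For all s, s' ∈ ℝ and all a, b, c, d, e > 0, one has ∫_{-∞}^{s} ∫_{-∞}^{s'} exp(−a|r−r'| − b|r−s| − c|r'−s'| − d|r−s'| − e|r'−s|) dr' dr ≤ 10·e^{−min(d,e)·|s−s'|/2} / ((b+d)(c+e) + a·min(b+d, c+e)). -/
/-!
Put `B = b + d`, `C = c + e` and `m = min s s'`. On the quadrant `r, r' ≤ m` the integrand is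
at most `exp (-min d e * |s - s'|) * exp (-a |r - r'| - B (m - r) - C (m - r'))`, and for fixed
`r` the `r'`-integral of the last factor is at most `3 / (a + C) * exp (-B (m - r))` (split at
`r' = r`). On the remaining strip (`r ∈ (s', s]` or `r' ∈ (s, s']`) the integrand is a product
of one-dimensional exponentials. Altogether the integral is at most
`5 exp (-min d e * |s - s'|) / (B (a + C))`, and `B (a + C) ≥ B C + a min B C`.
-/

open MeasureTheory Real Set

lemma setIntegral_union_le {X : Type*} [MeasurableSpace X] {μ : Measure X} {f : X → ℝ}
    {s t : Set X} (hf : ∀ x, 0 ≤ f x) (hst : Disjoint s t) (ht : MeasurableSet t) :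
    ∫ x in s ∪ t, f x ∂μ ≤ (∫ x in s, f x ∂μ) + ∫ x in t, f x ∂μ := by
  by_cases hint : IntegrableOn f (s ∪ t) μ
  · exact (setIntegral_union hst ht hint.left_of_union hint.right_of_union).le
  · rw [integral_undef hint]
    exact add_nonneg (integral_nonneg hf) (integral_nonneg hf)

lemma setIntegral_Iic_le_add {f : ℝ → ℝ} (hf : ∀ x, 0 ≤ f x) {p q : ℝ} (hpq : p ≤ q) :
    ∫ x in Iic q, f x ≤ (∫ x in Iic p, f x) + ∫ x in Ioc p q, f x := by
  rw [← Iic_union_Ioc_eq_Iic hpq]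
  exact setIntegral_union_le hf (Iic_disjoint_Ioc le_rfl) measurableSet_Ioc

section ExpIntegrals

variable {k : ℝ}

lemma integrableOn_exp_neg_mul_sub_Iic (hk : 0 < k) (p q : ℝ) :
    IntegrableOn (fun x => rexp (-(k * (q - x)))) (Iic p) := by
  refine IntegrableOn.congr_fun ((integrableOn_exp_mul_Iic hk p).const_mul (rexp (-(k * q))))
    (fun x _ => ?_) measurableSet_Iic
  rw [← exp_add]; ring_nf

lemma integral_exp_neg_mul_sub_Iic (hk : 0 < k) (q : ℝ) :
    ∫ x in Iic q, rexp (-(k * (q - x))) = 1 / k := by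
  have h x : rexp (-(k * (q - x))) = rexp (-(k * q)) * rexp (k * x) := by
    rw [← exp_add]; ring_nf
  simp_rw [h]
  rw [integral_const_mul, integral_exp_mul_Iic hk, exp_neg]
  field_simp

lemma integrableOn_exp_neg_mul_sub_Ioi (hk : 0 < k) (p : ℝ) :
    IntegrableOn (fun x => rexp (-(k * (x - p)))) (Ioi p) := by
  refine IntegrableOn.congr_fun
    ((integrableOn_exp_mul_Ioi (neg_neg_of_pos hk) p).const_mul (rexp (k * p)))
    (fun x _ => ?_) measurableSet_Ioi
  rw [← exp_add]; ring_nf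

lemma integral_exp_neg_mul_sub_Ioi (hk : 0 < k) (p : ℝ) :
    ∫ x in Ioi p, rexp (-(k * (x - p))) = 1 / k := by
  have h x : rexp (-(k * (x - p))) = rexp (k * p) * rexp (-k * x) := by
    rw [← exp_add]; ring_nf
  simp_rw [h]
  rw [integral_const_mul, integral_exp_mul_Ioi (neg_neg_of_pos hk), neg_mul, exp_neg]
  field_simp

end ExpIntegrals

lemma setIntegral_exp_le_of_subset {s t : Set ℝ} {u v : ℝ → ℝ} (hst : s ⊆ t)
    (huv : ∀ x ∈ s, u x ≤ v x) (hv : IntegrableOn (fun x => rexp (v x)) t) :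
    ∫ x in s, rexp (u x) ≤ ∫ x in t, rexp (v x) :=
  (setIntegral_mono_of_nonneg (fun _ _ => (exp_pos _).le) (fun x hx => exp_le_exp.2 (huv x hx))
    (hv.mono_set hst)).trans
    (setIntegral_mono_set hv (ae_of_all _ fun _ => (exp_pos _).le) hst.eventuallyLE)

lemma integral_exp_two_sided_Ioc_le {α β : ℝ} (hα : 0 < α) (hβ : 0 < β) (p q : ℝ) :
    ∫ x in Ioc p q, rexp (-(α * (x - p)) - β * (q - x)) ≤ 2 / (α + β) := by
  rcases le_total α β with h | h
  · calc _ ≤ ∫ x in Iic q, rexp (-(β * (q - x))) :=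
          setIntegral_exp_le_of_subset Ioc_subset_Iic_self
            (fun x hx => by nlinarith [mul_nonneg hα.le (sub_nonneg.2 hx.1.le)])
            (integrableOn_exp_neg_mul_sub_Iic hβ q q)
      _ = 1 / β := integral_exp_neg_mul_sub_Iic hβ q
      _ ≤ 2 / (α + β) := by rw [div_le_div_iff₀ hβ (by positivity)]; linarith
  · calc _ ≤ ∫ x in Ioi p, rexp (-(α * (x - p))) :=
          setIntegral_exp_le_of_subset Ioc_subset_Ioi_self
            (fun x hx => by nlinarith [mul_nonneg hβ.le (sub_nonneg.2 hx.2)])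
            (integrableOn_exp_neg_mul_sub_Ioi hα p)
      _ = 1 / α := integral_exp_neg_mul_sub_Ioi hα p
      _ ≤ 2 / (α + β) := by rw [div_le_div_iff₀ hα (by positivity)]; linarith

lemma integrableOn_exp_abs_sub_Iic {a C : ℝ} (ha : 0 ≤ a) (hC : 0 < C) (p q : ℝ) :
    IntegrableOn (fun x => rexp (-(a * |x - p|) - C * (q - x))) (Iic q) := by
  refine (integrableOn_exp_neg_mul_sub_Iic hC q q).mono'
    (by fun_prop : Continuous fun x => rexp (-(a * |x - p|) - C * (q - x))).aestronglyMeasurable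
    (ae_of_all _ fun x => ?_)
  rw [norm_of_nonneg (exp_pos _).le, exp_le_exp]
  nlinarith [mul_nonneg ha (abs_nonneg (x - p))]

lemma integral_exp_abs_sub_Iic_le {a C : ℝ} (ha : 0 < a) (hC : 0 < C) {p q : ℝ}
    (hpq : p ≤ q) :
    ∫ x in Iic q, rexp (-(a * |x - p|) - C * (q - x)) ≤ 3 / (a + C) := by
  have left : ∫ x in Iic p, rexp (-(a * |x - p|) - C * (q - x)) ≤ 1 / (a + C) := by
    rw [← integral_exp_neg_mul_sub_Iic (by positivity : 0 < a + C) p]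
    refine setIntegral_exp_le_of_subset subset_rfl (fun x hx => ?_)
      (integrableOn_exp_neg_mul_sub_Iic (by positivity) p p)
    rw [abs_of_nonpos (sub_nonpos.2 hx)]
    nlinarith
  have right : ∫ x in Ioc p q, rexp (-(a * |x - p|) - C * (q - x)) ≤ 2 / (a + C) := by
    refine le_trans ?_ (integral_exp_two_sided_Ioc_le ha hC p q)
    refine setIntegral_exp_le_of_subset subset_rfl (fun x hx => ?_)
      (Continuous.integrableOn_Ioc (by fun_prop))
    rw [abs_of_pos (sub_pos.2 hx.1)]
  calc _ ≤ _ := setIntegral_Iic_le_add (fun _ => (exp_pos _).le) hpq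
    _ ≤ 1 / (a + C) + 2 / (a + C) := add_le_add left right
    _ = 3 / (a + C) := by ring

noncomputable def expKernel (s s' a b c d e r r' : ℝ) : ℝ :=
  rexp (-(a * |r - r'|) - b * |r - s| - c * |r' - s'| - d * |r - s'| - e * |r' - s|)

section Kernel

variable {s s' a b c d e : ℝ}

lemma expKernel_nonneg (r r' : ℝ) : 0 ≤ expKernel s s' a b c d e r r' := (exp_pos _).le

lemma integral_expKernel_le_of_le (ha : 0 < a) (hb : 0 < b) (hc : 0 < c) (hd : 0 < d)
    (he : 0 < e) (hss : s' ≤ s) :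
    ∫ r in Iic s, ∫ r' in Iic s', expKernel s s' a b c d e r r'
      ≤ 5 * rexp (-(min d e * |s - s'|)) / ((b + d) * (a + c + e)) := by
  set E := rexp (-(min d e * |s - s'|))
  have hμ : min d e * |s - s'| ≤ e * (s - s') := by
    rw [abs_of_nonneg (sub_nonneg.2 hss)]
    exact mul_le_mul_of_nonneg_right (min_le_right d e) (sub_nonneg.2 hss)
  have hbss := mul_nonneg hb.le (sub_nonneg.2 hss)
  have near : ∀ r ∈ Iic s', ∫ r' in Iic s', expKernel s s' a b c d e r r'
      ≤ E * 3 / (a + c + e) * rexp (-((b + d) * (s' - r))) := by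
    intro r (hr : r ≤ s')
    calc _ ≤ ∫ r' in Iic s', E * rexp (-((b + d) * (s' - r)))
            * rexp (-(a * |r' - r|) - (c + e) * (s' - r')) := by
          refine setIntegral_mono_of_nonneg (fun _ _ => expKernel_nonneg _ _)
            (fun r' (hr' : r' ≤ s') => ?_)
            ((integrableOn_exp_abs_sub_Iic ha.le (by positivity) r s').const_mul _)
          rw [expKernel, ← exp_add, ← exp_add, exp_le_exp, abs_sub_comm r' r,
            abs_of_nonpos (sub_nonpos.2 (hr.trans hss)), abs_of_nonpos (sub_nonpos.2 hr'),
            abs_of_nonpos (sub_nonpos.2 hr), abs_of_nonpos (sub_nonpos.2 (hr'.trans hss))]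
          nlinarith
      _ ≤ E * rexp (-((b + d) * (s' - r))) * (3 / (a + c + e)) := by
          rw [integral_const_mul, add_assoc]
          gcongr
          exact integral_exp_abs_sub_Iic_le ha (by positivity) hr
      _ = _ := by ring
  have far : ∀ r ∈ Ioc s' s, ∫ r' in Iic s', expKernel s s' a b c d e r r'
      ≤ E / (a + c + e) * rexp (-((a + d) * (r - s')) - b * (s - r)) := by
    intro r hr
    calc _ ≤ ∫ r' in Iic s', E * rexp (-((a + d) * (r - s')) - b * (s - r))
            * rexp (-((a + c + e) * (s' - r'))) := by
          refine setIntegral_mono_of_nonneg (fun _ _ => expKernel_nonneg _ _)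
            (fun r' (hr' : r' ≤ s') => ?_)
            ((integrableOn_exp_neg_mul_sub_Iic (by positivity) s' s').const_mul _)
          rw [expKernel, ← exp_add, ← exp_add, exp_le_exp,
            abs_of_nonneg (by linarith [hr.1] : 0 ≤ r - r'), abs_of_nonpos (sub_nonpos.2 hr.2),
            abs_of_nonpos (sub_nonpos.2 hr'), abs_of_nonneg (sub_nonneg.2 hr.1.le),
            abs_of_nonpos (by linarith : r' - s ≤ 0)]
          nlinarith
      _ = E / (a + c + e) * rexp (-((a + d) * (r - s')) - b * (s - r)) := by
          rw [integral_const_mul, integral_exp_neg_mul_sub_Iic (by positivity)]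
          ring
  calc _ ≤ (∫ r in Iic s', ∫ r' in Iic s', expKernel s s' a b c d e r r')
        + ∫ r in Ioc s' s, ∫ r' in Iic s', expKernel s s' a b c d e r r' :=
        setIntegral_Iic_le_add (fun _ => integral_nonneg fun _ => expKernel_nonneg _ _) hss
    _ ≤ (∫ r in Iic s', E * 3 / (a + c + e) * rexp (-((b + d) * (s' - r))))
        + ∫ r in Ioc s' s, E / (a + c + e) * rexp (-((a + d) * (r - s')) - b * (s - r)) :=
        add_le_add
          (setIntegral_mono_of_nonneg (fun _ _ => integral_nonneg fun _ => expKernel_nonneg _ _)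
            near ((integrableOn_exp_neg_mul_sub_Iic (by positivity) s' s').const_mul _))
          (setIntegral_mono_of_nonneg (fun _ _ => integral_nonneg fun _ => expKernel_nonneg _ _)
            far (Continuous.integrableOn_Ioc (by fun_prop)))
    _ ≤ E * 3 / (a + c + e) * (1 / (b + d)) + E / (a + c + e) * (2 / (b + d)) := by
        rw [integral_const_mul, integral_const_mul, integral_exp_neg_mul_sub_Iic (by positivity)]
        gcongr
        calc _ ≤ 2 / (a + d + b) := integral_exp_two_sided_Ioc_le (by positivity) hb s' s
          _ ≤ 2 / (b + d) :=
            div_le_div_of_nonneg_left zero_le_two (by positivity) (by linarith)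
    _ = 5 * E / ((b + d) * (a + c + e)) := by field_simp; ring

lemma integral_expKernel_le_of_ge (ha : 0 < a) (hb : 0 < b) (hc : 0 < c) (hd : 0 < d)
    (he : 0 < e) (hss : s ≤ s') :
    ∫ r in Iic s, ∫ r' in Iic s', expKernel s s' a b c d e r r'
      ≤ 5 * rexp (-(min d e * |s - s'|)) / ((b + d) * (a + c + e)) := by
  set E := rexp (-(min d e * |s - s'|))
  have hμ : min d e * |s - s'| ≤ d * (s' - s) := by
    rw [abs_sub_comm, abs_of_nonneg (sub_nonneg.2 hss)]
    exact mul_le_mul_of_nonneg_right (min_le_left d e) (sub_nonneg.2 hss)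
  have hcss := mul_nonneg hc.le (sub_nonneg.2 hss)
  have inner : ∀ r ∈ Iic s, ∫ r' in Iic s', expKernel s s' a b c d e r r'
      ≤ E * 5 / (a + c + e) * rexp (-((b + d) * (s - r))) := by
    intro r (hr : r ≤ s)
    have near : ∫ r' in Iic s, expKernel s s' a b c d e r r'
        ≤ E * rexp (-((b + d) * (s - r))) * (3 / (a + c + e)) := by
      calc _ ≤ ∫ r' in Iic s, E * rexp (-((b + d) * (s - r)))
              * rexp (-(a * |r' - r|) - (c + e) * (s - r')) := by
            refine setIntegral_mono_of_nonneg (fun _ _ => expKernel_nonneg _ _)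
              (fun r' (hr' : r' ≤ s) => ?_)
              ((integrableOn_exp_abs_sub_Iic ha.le (by positivity) r s).const_mul _)
            rw [expKernel, ← exp_add, ← exp_add, exp_le_exp, abs_sub_comm r' r,
              abs_of_nonpos (sub_nonpos.2 hr), abs_of_nonpos (sub_nonpos.2 (hr'.trans hss)),
              abs_of_nonpos (sub_nonpos.2 (hr.trans hss)), abs_of_nonpos (sub_nonpos.2 hr')]
            nlinarith
        _ ≤ _ := by
            rw [integral_const_mul, add_assoc]
            gcongr
            exact integral_exp_abs_sub_Iic_le ha (by positivity) hr
    have far : ∫ r' in Ioc s s', expKernel s s' a b c d e r r'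
        ≤ E * rexp (-((b + d) * (s - r))) * (2 / (a + e + c)) := by
      calc _ ≤ ∫ r' in Ioc s s', E * rexp (-((b + d) * (s - r)))
              * rexp (-((a + e) * (r' - s)) - c * (s' - r')) := by
            refine setIntegral_mono_of_nonneg (fun _ _ => expKernel_nonneg _ _)
              (fun r' hr' => ?_) (Continuous.integrableOn_Ioc (by fun_prop))
            have har := mul_nonneg ha.le (sub_nonneg.2 hr)
            rw [expKernel, ← exp_add, ← exp_add, exp_le_exp,
              abs_of_nonpos (by linarith [hr'.1] : r - r' ≤ 0), abs_of_nonpos (sub_nonpos.2 hr),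
              abs_of_nonpos (sub_nonpos.2 hr'.2), abs_of_nonpos (sub_nonpos.2 (hr.trans hss)),
              abs_of_nonneg (sub_nonneg.2 hr'.1.le)]
            nlinarith
        _ ≤ _ := by
            rw [integral_const_mul]
            gcongr
            exact integral_exp_two_sided_Ioc_le (by positivity) hc s s'
    calc _ ≤ _ := setIntegral_Iic_le_add (fun _ => expKernel_nonneg _ _) hss
      _ ≤ _ := add_le_add near far
      _ = _ := by ring
  calc _ ≤ ∫ r in Iic s, E * 5 / (a + c + e) * rexp (-((b + d) * (s - r))) :=
        setIntegral_mono_of_nonneg (fun _ _ => integral_nonneg fun _ => expKernel_nonneg _ _)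
          inner ((integrableOn_exp_neg_mul_sub_Iic (by positivity) s s).const_mul _)
    _ = 5 * E / ((b + d) * (a + c + e)) := by
        rw [integral_const_mul, integral_exp_neg_mul_sub_Iic (by positivity)]
        field_simp

lemma integral_expKernel_le (ha : 0 < a) (hb : 0 < b) (hc : 0 < c) (hd : 0 < d) (he : 0 < e) :
    ∫ r in Iic s, ∫ r' in Iic s', expKernel s s' a b c d e r r'
      ≤ 5 * rexp (-(min d e * |s - s'|)) / ((b + d) * (a + c + e)) :=
  (le_total s' s).elim (integral_expKernel_le_of_le ha hb hc hd he)
    (integral_expKernel_le_of_ge ha hb hc hd he)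

end Kernel

/-- Proposition A.7: bound on a general double exponential integral. -/
theorem stmt_7 (s s' a b c d e : ℝ) (ha : 0 < a) (hb : 0 < b) (hc : 0 < c)
    (hd : 0 < d) (he : 0 < e) :
    (∫ r in Set.Iic s, ∫ r' in Set.Iic s',
        Real.exp (-(a * |r - r'|) - b * |r - s| - c * |r' - s'|
                  - d * |r - s'| - e * |r' - s|))
      ≤ 10 * Real.exp (-(min d e * |s - s'| / 2))
          / ((b + d) * (c + e) + a * min (b + d) (c + e)) := by
  have hD : 0 < (b + d) * (c + e) + a * min (b + d) (c + e) := by positivity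
  have hD_le : (b + d) * (c + e) + a * min (b + d) (c + e) ≤ (b + d) * (a + c + e) := by
    nlinarith [mul_le_mul_of_nonneg_left (min_le_left (b + d) (c + e)) ha.le]
  have hexp : rexp (-(min d e * |s - s'|)) ≤ rexp (-(min d e * |s - s'| / 2)) := by
    rw [exp_le_exp]
    linarith [mul_nonneg (le_min hd.le he.le) (abs_nonneg (s - s'))]
  calc _ ≤ 5 * rexp (-(min d e * |s - s'|)) / ((b + d) * (a + c + e)) :=
        integral_expKernel_le ha hb hc hd he
    _ ≤ 5 * rexp (-(min d e * |s - s'|)) / ((b + d) * (c + e) + a * min (b + d) (c + e)) :=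
        div_le_div_of_nonneg_left (by positivity) hD hD_le
    _ ≤ _ := by gcongr; linarith [exp_pos (-(min d e * |s - s'| / 2))]
end

section
/- For every κ ∈ (0,1] and all nonzero integers k, m with |k| ≠ |m| and k + m ≠ 0 ≠ k − m, the quantity J_{k,m}(δ) := (k+m)·e^{−((k+m)² + m²)δ} + (k−m)·e^{−((k−m)² + m²)δ} satisfies |J_{k,m}(δ)| ≤ C·e^{−c(m² + (k+m)²)δ}·|k|^ε·(|m| + |k+m|)^{1−ε} for all δ > 0 and every ε ∈ [0,1], where c, C > 0 are constants independent of k, m, δ. -/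
/-!
Write `P± = exp (-((x ± y)² + y²) δ)` and `q = x² + y²`. Both exponents are at least `q / 4`,
and `y² + (x + y)² ≤ 3 q`, so half of this decay, `exp (-(q / 8) δ)`, already dominates the target
`exp (-(y² + (x + y)²) δ / 24)`; the other half absorbs polynomial factors.
The trivial bound `|J| ≤ |x + y| P₊ + |x - y| P₋` gives the factor `|y| + |x + y|`.
For the factor `|x|`, write `J = x (P₊ + P₋) + y (P₊ - P₋)`: the mean value bound
`|P₊ - P₋| ≤ 4 |x y| δ exp (-(q / 4) δ)` leaves `|x| · y² δ exp (-(q / 8) δ) ≤ 8 |x|`,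
since `s e^{-s} ≤ 1`. Interpolating, `min a b ≤ a ^ ε * b ^ (1 - ε)`.
-/

open Real

theorem abs_exp_neg_mul_sub_exp_neg_mul_le {a b m δ : ℝ} (hδ : 0 ≤ δ) (ha : m ≤ a) (hb : m ≤ b) :
    |exp (-a * δ) - exp (-b * δ)| ≤ |a - b| * δ * exp (-m * δ) := by
  wlog hab : a ≤ b generalizing a b
  · rw [abs_sub_comm, abs_sub_comm a]
    exact this hb ha (le_of_not_ge hab)
  have hsplit : exp (-b * δ) = exp (-a * δ) * exp (-((b - a) * δ)) := by
    rw [← exp_add]; ring_nf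
  have hlin := one_sub_le_exp_neg ((b - a) * δ)
  have hexp : exp (-a * δ) ≤ exp (-m * δ) := exp_le_exp.2 (by nlinarith)
  rw [abs_of_nonneg (sub_nonneg.2 (exp_le_exp.2 (by nlinarith))), abs_sub_comm,
    abs_of_nonneg (sub_nonneg.2 hab), hsplit]
  calc exp (-a * δ) - exp (-a * δ) * exp (-((b - a) * δ))
      ≤ exp (-a * δ) * ((b - a) * δ) := by nlinarith [exp_pos (-a * δ)]
    _ ≤ (b - a) * δ * exp (-m * δ) := by
      rw [mul_comm]; exact mul_le_mul_of_nonneg_left hexp (by nlinarith)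

theorem min_le_rpow_mul_rpow {a b ε : ℝ} (ha : 0 ≤ a) (hb : 0 ≤ b) (hε₀ : 0 ≤ ε) (hε₁ : ε ≤ 1) :
    min a b ≤ a ^ ε * b ^ (1 - ε) := by
  have hmin : 0 ≤ min a b := le_min ha hb
  calc min a b = min a b ^ ε * min a b ^ (1 - ε) := by
        rw [← rpow_add' hmin (by norm_num), add_sub_cancel, rpow_one]
    _ ≤ a ^ ε * b ^ (1 - ε) := by
      gcongr
      · exact min_le_left a b
      · exact min_le_right a b

theorem sq_add_sq_div_four_le (x y : ℝ) : (x ^ 2 + y ^ 2) / 4 ≤ (x + y) ^ 2 + y ^ 2 := by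
  nlinarith [sq_nonneg (3 * x + 4 * y)]

theorem sq_add_add_sq_le_three_mul (x y : ℝ) : y ^ 2 + (x + y) ^ 2 ≤ 3 * (x ^ 2 + y ^ 2) := by
  nlinarith [sq_nonneg (x - y)]

theorem mul_exp_neg_le_one (s : ℝ) : s * exp (-s) ≤ 1 :=
  (mul_exp_neg_le_exp_neg_one s).trans (exp_le_one_iff.2 (by norm_num))

noncomputable def J (x y δ : ℝ) : ℝ :=
  (x + y) * exp (-((x + y) ^ 2 + y ^ 2) * δ) + (x - y) * exp (-((x - y) ^ 2 + y ^ 2) * δ)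

section

variable {x y δ : ℝ}

theorem exp_neg_add_sq_mul_le (hδ : 0 ≤ δ) :
    exp (-((x + y) ^ 2 + y ^ 2) * δ) ≤ exp (-((x ^ 2 + y ^ 2) / 4) * δ) :=
  exp_le_exp.2 (by nlinarith [sq_add_sq_div_four_le x y])

theorem exp_neg_sub_sq_mul_le (hδ : 0 ≤ δ) :
    exp (-((x - y) ^ 2 + y ^ 2) * δ) ≤ exp (-((x ^ 2 + y ^ 2) / 4) * δ) := by
  simpa [← sub_eq_add_neg] using exp_neg_add_sq_mul_le (y := -y) hδ

theorem exp_neg_eighth_le (hδ : 0 ≤ δ) :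
    exp (-((x ^ 2 + y ^ 2) / 8) * δ) ≤ exp (-(1 / 24) * (y ^ 2 + (x + y) ^ 2) * δ) :=
  exp_le_exp.2 (by nlinarith [sq_add_add_sq_le_three_mul x y])

theorem exp_neg_quarter_le (hδ : 0 ≤ δ) :
    exp (-((x ^ 2 + y ^ 2) / 4) * δ) ≤ exp (-(1 / 24) * (y ^ 2 + (x + y) ^ 2) * δ) :=
  (exp_le_exp.2 (by nlinarith [sq_nonneg x, sq_nonneg y])).trans (exp_neg_eighth_le hδ)

theorem J_eq_mul_add_add_mul_sub :
    J x y δ = x * (exp (-((x + y) ^ 2 + y ^ 2) * δ) + exp (-((x - y) ^ 2 + y ^ 2) * δ))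
      + y * (exp (-((x + y) ^ 2 + y ^ 2) * δ) - exp (-((x - y) ^ 2 + y ^ 2) * δ)) := by
  rw [J]; ring

theorem abs_J_le_mul_abs (hδ : 0 ≤ δ) :
    |J x y δ| ≤ 34 * exp (-(1 / 24) * (y ^ 2 + (x + y) ^ 2) * δ) * |x| := by
  have hplus := (exp_neg_add_sq_mul_le hδ).trans (exp_neg_quarter_le (x := x) (y := y) hδ)
  have hminus := (exp_neg_sub_sq_mul_le hδ).trans (exp_neg_quarter_le (x := x) (y := y) hδ)
  have hdiff := abs_exp_neg_mul_sub_exp_neg_mul_le hδ (sq_add_sq_div_four_le x y)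
    (by simpa [← sub_eq_add_neg] using sq_add_sq_div_four_le x (-y))
  rw [J_eq_mul_add_add_mul_sub]
  set q := x ^ 2 + y ^ 2
  set Pp := exp (-((x + y) ^ 2 + y ^ 2) * δ)
  set Pm := exp (-((x - y) ^ 2 + y ^ 2) * δ)
  set E := exp (-(1 / 24) * (y ^ 2 + (x + y) ^ 2) * δ)
  set R := exp (-(q / 8) * δ)
  have hRE : R ≤ E := exp_neg_eighth_le hδ
  have hRR : exp (-(q / 4) * δ) = R * R := by rw [← exp_add]; ring_nf
  have hdecay : y ^ 2 * δ * R ≤ 8 := by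
    have hsplit : y ^ 2 * δ * R = 8 * (q / 8 * δ * R) - x ^ 2 * δ * R := by ring
    have hmax : q / 8 * δ * R ≤ 1 := by
      simpa only [R, neg_mul] using mul_exp_neg_le_one (q / 8 * δ)
    have : 0 ≤ x ^ 2 * δ * R := by positivity
    linarith
  have hsub : (x + y) ^ 2 + y ^ 2 - ((x - y) ^ 2 + y ^ 2) = 4 * x * y := by ring
  calc |x * (Pp + Pm) + y * (Pp - Pm)| ≤ |x| * (Pp + Pm) + |y| * |Pp - Pm| := by
        grw [abs_add_le, abs_mul, abs_mul, abs_of_pos (by positivity : 0 < Pp + Pm)]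
    _ ≤ |x| * (2 * E) + |y| * (|4 * x * y| * δ * (R * R)) := by
        rw [← hsub, ← hRR]
        gcongr
        linarith
    _ = |x| * (2 * E) + 4 * |x| * (y ^ 2 * δ * R) * R := by
        rw [abs_mul, abs_mul, abs_of_pos (four_pos : (0 : ℝ) < 4), ← sq_abs y]; ring
    _ ≤ |x| * (2 * E) + 4 * |x| * 8 * E := by gcongr
    _ = 34 * E * |x| := by ring

theorem abs_J_le_mul_abs_add_abs (hδ : 0 ≤ δ) :
    |J x y δ| ≤ 2 * exp (-(1 / 24) * (y ^ 2 + (x + y) ^ 2) * δ) * (|y| + |x + y|) := by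
  have hplus := (exp_neg_add_sq_mul_le hδ).trans (exp_neg_quarter_le (x := x) (y := y) hδ)
  have hminus := (exp_neg_sub_sq_mul_le hδ).trans (exp_neg_quarter_le (x := x) (y := y) hδ)
  have hsub : |x - y| ≤ |x + y| + 2 * |y| := by
    have := abs_sub (x + y) (2 * y)
    rwa [abs_mul, abs_two, show x + y - 2 * y = x - y by ring] at this
  rw [J]
  set E := exp (-(1 / 24) * (y ^ 2 + (x + y) ^ 2) * δ)
  calc _ ≤ |x + y| * exp (-((x + y) ^ 2 + y ^ 2) * δ)
          + |x - y| * exp (-((x - y) ^ 2 + y ^ 2) * δ) := by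
        grw [abs_add_le, abs_mul, abs_mul, abs_of_pos (exp_pos _), abs_of_pos (exp_pos _)]
    _ ≤ |x + y| * E + (|x + y| + 2 * |y|) * E := by gcongr
    _ = 2 * E * (|y| + |x + y|) := by ring

theorem abs_J_le_mul_min (hδ : 0 ≤ δ) :
    |J x y δ| ≤ 34 * exp (-(1 / 24) * (y ^ 2 + (x + y) ^ 2) * δ) * min |x| (|y| + |x + y|) := by
  rcases min_cases |x| (|y| + |x + y|) with ⟨h, -⟩ | ⟨h, -⟩ <;> rw [h]
  · exact abs_J_le_mul_abs hδ
  · exact (abs_J_le_mul_abs_add_abs hδ).trans (by gcongr; norm_num)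

end

/-- Lemma 5.10: the bound `|J_{k,m}(δ)| ≤ C e^{-c(m²+(k+m)²)δ} |k|^ε (|m|+|k+m|)^{1-ε}`,
with constants independent of `k`, `m` and `δ`. -/
theorem stmt_8 :
    ∃ c C : ℝ, 0 < c ∧ 0 < C ∧
      ∀ κ : ℝ, κ ∈ Set.Ioc (0 : ℝ) 1 →
      ∀ k m : ℤ, k ≠ 0 → m ≠ 0 → |k| ≠ |m| → k + m ≠ 0 → k - m ≠ 0 →
      ∀ δ : ℝ, 0 < δ → ∀ ε : ℝ, ε ∈ Set.Icc (0 : ℝ) 1 →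
        |((k : ℝ) + m) * Real.exp (-(((k : ℝ) + m) ^ 2 + (m : ℝ) ^ 2) * δ)
          + ((k : ℝ) - m) * Real.exp (-(((k : ℝ) - m) ^ 2 + (m : ℝ) ^ 2) * δ)|
          ≤ C * Real.exp (-c * ((m : ℝ) ^ 2 + ((k : ℝ) + m) ^ 2) * δ)
              * |(k : ℝ)| ^ ε * (|(m : ℝ)| + |(k : ℝ) + m|) ^ (1 - ε) := by
  refine ⟨1 / 24, 34, by norm_num, by norm_num, ?_⟩
  intro _ _ k m _ _ _ _ _ δ hδ ε ⟨hε₀, hε₁⟩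
  calc |J k m δ|
      ≤ 34 * exp (-(1 / 24) * ((m : ℝ) ^ 2 + (k + m) ^ 2) * δ)
          * min |(k : ℝ)| (|(m : ℝ)| + |(k : ℝ) + m|) :=
        abs_J_le_mul_min hδ.le
    _ ≤ 34 * exp (-(1 / 24) * ((m : ℝ) ^ 2 + (k + m) ^ 2) * δ)
          * (|(k : ℝ)| ^ ε * (|(m : ℝ)| + |(k : ℝ) + m|) ^ (1 - ε)) := by
        gcongr
        exact min_le_rpow_mul_rpow (abs_nonneg _) (by positivity) hε₀ hε₁
    _ = _ := by ring
end

section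
/- For every β ∈ (0, 1/2) there exists a constant C such that for every nonzero integer k, ∑_{ℓ ∈ ℤ} (ℓ² + (k−ℓ)²)^β / (k² − kℓ + ℓ²) ≤ C·|k|^{2β−1}. -/
/-!
With `t = 1 - 2β > 0`, the summand is at most `32 (|k| + 1 + |ℓ|)^(-(1+t))`, because
`ℓ² + (k-ℓ)² ≤ 2(k² - kℓ + ℓ²)` and `k² - kℓ + ℓ² ≥ ((|k| + 1 + |ℓ|)/4)²`. Summing over `ℓ ∈ ℤ`
leaves twice the tail `∑_{n ≥ 0} (|k| + 1 + n)^(-(1+t))`, which telescopes: Bernoulli's inequality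
gives `t (x+1)^(-(1+t)) ≤ x^(-t) - (x+1)^(-t)`, so the tail is at most `|k|^(-t) / t`.
-/

open Real Finset

lemma mul_add_one_rpow_neg_le_sub_rpow_neg {x t : ℝ} (hx : 0 < x) (ht : 0 ≤ t) :
    t * (x + 1) ^ (-(1 + t)) ≤ x ^ (-t) - (x + 1) ^ (-t) := by
  have hx1 : 0 < x + 1 := by linarith
  have hbern : 1 + (1 + t) * x⁻¹ ≤ (1 + x⁻¹) ^ (1 + t) :=
    one_add_mul_self_le_rpow_one_add (by linarith [inv_pos.2 hx]) (by linarith)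
  rw [show 1 + x⁻¹ = (x + 1) / x by field_simp, div_rpow hx1.le hx.le,
    rpow_one_add' hx1.le (by linarith), rpow_one_add' hx.le (by linarith)] at hbern
  rw [rpow_neg hx.le, rpow_neg hx1.le, rpow_neg hx1.le, rpow_one_add' hx1.le (by linarith)]
  have hu := rpow_pos_of_pos hx t
  generalize x ^ t = u at *
  generalize (x + 1) ^ t = v at *
  rw [le_div_iff₀ (by positivity), show (1 + (1 + t) * x⁻¹) * (x * u) = (x + 1 + t) * u by
    field_simp; ring] at hbern
  have hv : 0 < v := by nlinarith
  rw [← sub_nonneg]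
  field_simp
  nlinarith

lemma sum_range_rpow_neg_le {x t : ℝ} (hx : 0 < x) (ht : 0 < t) (N : ℕ) :
    ∑ n ∈ range N, (x + 1 + n) ^ (-(1 + t)) ≤ x ^ (-t) / t := by
  have htelescope : ∀ n : ℕ,
      (x + 1 + n) ^ (-(1 + t)) ≤ (x + n) ^ (-t) / t - (x + (n + 1 : ℕ)) ^ (-t) / t := by
    intro n
    rw [← sub_div, le_div_iff₀ ht, mul_comm, Nat.cast_succ, ← add_assoc, add_right_comm x 1]
    exact mul_add_one_rpow_neg_le_sub_rpow_neg (by positivity) ht.le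
  calc ∑ n ∈ range N, (x + 1 + n) ^ (-(1 + t))
      ≤ ∑ n ∈ range N, ((x + n) ^ (-t) / t - (x + (n + 1 : ℕ)) ^ (-t) / t) :=
        sum_le_sum fun n _ => htelescope n
    _ = x ^ (-t) / t - (x + N) ^ (-t) / t := by
        rw [sum_range_sub' (fun n : ℕ => (x + n) ^ (-t) / t)]; simp
    _ ≤ x ^ (-t) / t := by
        have : 0 ≤ (x + N) ^ (-t) / t := by positivity
        linarith

lemma HasSum.int_natAbs {G : Type*} [AddCommGroup G] [TopologicalSpace G]
    [IsTopologicalAddGroup G] {f : ℕ → G} {a : G} (hf : HasSum f a) :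
    HasSum (fun ℓ : ℤ => f ℓ.natAbs) (a + a - f 0) :=
  HasSum.of_nat_of_neg (by simpa using hf) (by simpa using hf)

lemma rpow_div_sq_sub_mul_add_sq_le {β c y : ℝ} (hβ0 : 0 ≤ β) (hβ1 : β ≤ 1) (hc : 1 ≤ |c|) :
    (y ^ 2 + (c - y) ^ 2) ^ β / (c ^ 2 - c * y + y ^ 2) ≤ 32 * (|c| + 1 + |y|) ^ (2 * β - 2) := by
  set Q := c ^ 2 - c * y + y ^ 2
  set z := |c| + 1 + |y|
  have hz : 0 < z := by positivity
  have hQz : (z / 4) ^ 2 ≤ Q := by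
    -- `Q ≥ ((|c| + |y|) / 2)²` and `z ≤ 2 (|c| + |y|)` as `1 ≤ |c|`
    have hcy : c * y ≤ |c| * |y| := by rw [← abs_mul]; exact le_abs_self _
    nlinarith [sq_abs c, sq_abs y, sq_nonneg (|c| - |y|), abs_nonneg y]
  have hQ : 0 < Q := lt_of_lt_of_le (by positivity) hQz
  have hN : y ^ 2 + (c - y) ^ 2 ≤ 2 * Q := by nlinarith [sq_nonneg c]
  calc (y ^ 2 + (c - y) ^ 2) ^ β / Q ≤ (2 * Q) ^ β / Q := by gcongr
    _ = 2 ^ β * Q ^ (β - 1) := by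
        rw [mul_rpow zero_le_two hQ.le, rpow_sub_one hQ.ne', mul_div_assoc]
    _ ≤ 2 * ((z / 4) ^ 2) ^ (β - 1) :=
        mul_le_mul (rpow_le_self_of_one_le one_le_two hβ1)
          (rpow_le_rpow_of_nonpos (by positivity) hQz (by linarith)) (by positivity) zero_le_two
    _ = 2 * (4 ^ (2 - 2 * β) * z ^ (2 * β - 2)) := by
        rw [← rpow_natCast, ← rpow_mul (by positivity), div_rpow hz.le (by norm_num),
          div_eq_mul_inv, ← rpow_neg (by norm_num)]
        ring_nf
    _ ≤ 2 * (4 ^ (2 : ℝ) * z ^ (2 * β - 2)) := by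
        gcongr
        · norm_num
        · linarith
    _ = 32 * z ^ (2 * β - 2) := by norm_num; ring

/-- For every `β ∈ (0,1/2)`, `∑_{ℓ ∈ ℤ} (ℓ² + (k-ℓ)²)^β/(k² - kℓ + ℓ²) ≲ |k|^{2β-1}`,
uniformly over nonzero integers `k`. -/
theorem stmt_10 (β : ℝ) (hβ0 : 0 < β) (hβ : β < 1 / 2) :
    ∃ C : ℝ, ∀ k : ℤ, k ≠ 0 →
      (∑' ℓ : ℤ,
          (((ℓ : ℝ) ^ 2 + ((k : ℝ) - (ℓ : ℝ)) ^ 2) ^ β)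
            / ((k : ℝ) ^ 2 - (k : ℝ) * (ℓ : ℝ) + (ℓ : ℝ) ^ 2))
        ≤ C * |(k : ℝ)| ^ (2 * β - 1) := by
  set t := 1 - 2 * β
  have ht : 0 < t := by linarith
  refine ⟨64 / t, fun k hk => ?_⟩
  set x := |(k : ℝ)| with hx_def
  have hx : 1 ≤ x := by rw [hx_def, ← Int.cast_abs]; exact_mod_cast Int.one_le_abs hk
  set g : ℕ → ℝ := fun n => (x + 1 + n) ^ (-(1 + t))
  have hg_partial := sum_range_rpow_neg_le (by linarith) ht
  have hg : Summable g := summable_of_sum_range_le (fun n => by positivity) hg_partial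
  have hG := hg.hasSum.int_natAbs
  have hbound : ∀ ℓ : ℤ, (((ℓ : ℝ) ^ 2 + ((k : ℝ) - (ℓ : ℝ)) ^ 2) ^ β)
      / ((k : ℝ) ^ 2 - (k : ℝ) * (ℓ : ℝ) + (ℓ : ℝ) ^ 2) ≤ 32 * g ℓ.natAbs := by
    intro ℓ
    convert rpow_div_sq_sub_mul_add_sq_le (y := ℓ) hβ0.le (by linarith) hx using 3
    · simp [hx_def, Nat.cast_natAbs]
    · ring
  calc _ ≤ ∑' ℓ : ℤ, 32 * g ℓ.natAbs :=
        Summable.tsum_le_tsum hbound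
          ((hG.summable.mul_left 32).of_nonneg_of_le (fun ℓ => div_nonneg (by positivity) (by
            nlinarith [sq_nonneg ((k : ℝ) - ℓ), sq_nonneg (k : ℝ), sq_nonneg (ℓ : ℝ)])) hbound)
          (hG.summable.mul_left 32)
    _ = 32 * (2 * ∑' n, g n - g 0) := by rw [tsum_mul_left, hG.tsum_eq]; ring
    _ ≤ 64 * (x ^ (-t) / t) := by
        have : 0 ≤ g 0 := by positivity
        linarith [hg.tsum_le_of_sum_range_le hg_partial]
    _ = 64 / t * x ^ (2 * β - 1) := by rw [show 2 * β - 1 = -t by ring]; ring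
end

section
/- For every α, β, γ > 0, the supremum over a ∈ ℤ of (1 ∨ |a|)^γ · ∑_{k ∈ ℤ} 1/((1 ∨ |k|)^α · (1 ∨ |a−k|)^β) is finite provided one of the following holds: (i) max(α,β) < 1, α + β > 1, and γ = α + β − 1; (ii) max(α,β) > 1 and γ = min(α,β); (iii) max(α,β) = 1, min(α,β) + 1 > 1 (i.e. min(α,β) > 0), and γ < min(α,β). -/
/-!
Write `⟨x⟩ = 1 ∨ |x|` and `w = ⟨a⟩`. Since `w ≤ ⟨k⟩ + ⟨a - k⟩`, the larger of `⟨k⟩` and `⟨a - k⟩`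
is at least `w / 2`. If it is `⟨a - k⟩`, the term is at most `(w / 2)^(-β) ⟨k⟩^(-α)` when
`⟨k⟩ ≤ w` and at most `⟨k⟩^(-(α + β))` when `⟨k⟩ > w`; symmetrically otherwise. The near sums
`∑_{⟨k⟩ ≤ w} ⟨k⟩^(-s)` are `O(w^(1 - s))` for `s < 1` (telescoping against the concave
`x^(1 - s)`), `O(w^ε)` for `s = 1` and `O(1)` for `s > 1`, while the tail
`∑_{⟨k⟩ > w} ⟨k⟩^(-(α + β))` is `O(w^(1 - α - β))` by the integral test. In each of the three
regimes `w^γ` times these bounds stays bounded.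
-/

open Real Set

namespace ConvolutionBound

lemma mul_rpow_sub_one_le_rpow_sub_rpow {p x : ℝ} (hp0 : 0 ≤ p) (hp1 : p ≤ 1) (hx : 1 ≤ x) :
    p * x ^ (p - 1) ≤ x ^ p - (x - 1) ^ p := by
  have hx0 : 0 < x := by linarith
  have bernoulli : (1 + -x⁻¹) ^ p ≤ 1 + p * -x⁻¹ :=
    rpow_one_add_le_one_add_mul_self (by linarith [inv_le_one_of_one_le₀ hx]) hp0 hp1
  have hfactor : x - 1 = x * (1 + -x⁻¹) := by field_simp; ring
  rw [hfactor, mul_rpow hx0.le (by linarith [inv_le_one_of_one_le₀ hx]), rpow_sub_one hx0.ne']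
  calc p * (x ^ p / x) = x ^ p - x ^ p * (1 + p * -x⁻¹) := by ring
    _ ≤ x ^ p - x ^ p * (1 + -x⁻¹) ^ p := by gcongr

lemma sum_range_indicator_Iic_rpow_neg_le {s w : ℝ} (hs0 : 0 < s) (hs1 : s < 1) (hw : 0 ≤ w)
    (M : ℕ) :
    ∑ n ∈ Finset.range M, (Iic w).indicator (· ^ (-s)) ((n : ℝ) + 1) ≤ w ^ (1 - s) / (1 - s) := by
  have hs : 0 < 1 - s := by linarith
  -- the antiderivative of `x ^ (-s)` frozen beyond `w`: its increments dominate the terms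
  set F : ℝ → ℝ := fun x => min x w ^ (1 - s) / (1 - s)
  have hstep : ∀ n : ℕ, (Iic w).indicator (· ^ (-s)) ((n : ℝ) + 1) ≤ F (n + 1) - F n := by
    intro n
    by_cases hn : (n : ℝ) + 1 ≤ w
    · have key := mul_rpow_sub_one_le_rpow_sub_rpow hs.le (by linarith : 1 - s ≤ 1)
        (by linarith [n.cast_nonneg (α := ℝ)] : (1 : ℝ) ≤ n + 1)
      simp only [F, indicator_of_mem (mem_Iic.2 hn), min_eq_left hn,
        min_eq_left (by linarith : (n : ℝ) ≤ w)]
      rw [sub_sub_cancel_left, add_sub_cancel_right] at key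
      rw [← sub_div, le_div_iff₀ hs]
      linarith
    · simp only [F, indicator_of_notMem (fun h => hn (mem_Iic.1 h))]
      rw [sub_nonneg]
      gcongr
      linarith
  calc ∑ n ∈ Finset.range M, (Iic w).indicator (· ^ (-s)) ((n : ℝ) + 1)
      ≤ ∑ n ∈ Finset.range M, (F ((n + 1 : ℕ) : ℝ) - F n) := by
        gcongr with n; push_cast; exact hstep n
    _ = F M - F ((0 : ℕ) : ℝ) := Finset.sum_range_sub (fun n : ℕ => F n) M
    _ ≤ w ^ (1 - s) / (1 - s) := by
        simp only [F, Nat.cast_zero, min_eq_left hw, zero_rpow hs.ne', zero_div, sub_zero]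
        gcongr
        exact min_le_right _ _

lemma summable_nat_add_one_rpow_neg {s : ℝ} (hs : 1 < s) :
    Summable fun n : ℕ => ((n : ℝ) + 1) ^ (-s) := by
  have h := (summable_nat_add_iff 1).2 (summable_nat_rpow.2 (by linarith : -s < -1))
  exact_mod_cast h

lemma summable_indicator_rpow_neg_nat_add_one {s : ℝ} (hs : 1 < s) (S : Set ℝ) :
    Summable fun n : ℕ => S.indicator (· ^ (-s)) ((n : ℝ) + 1) :=
  (summable_nat_add_one_rpow_neg hs).of_nonneg_of_le
    (fun _ => indicator_apply_nonneg fun _ => rpow_nonneg (by positivity) _)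
    (fun _ => indicator_apply_le' (fun _ => le_rfl) fun _ => rpow_nonneg (by positivity) _)

lemma summable_indicator_Iic_nat_add_one (f : ℝ → ℝ) (w : ℝ) :
    Summable fun n : ℕ => (Iic w).indicator f ((n : ℝ) + 1) :=
  summable_of_ne_finset_zero (s := Finset.range ⌈w⌉₊) fun n hn =>
    indicator_of_notMem (fun h => hn (Finset.mem_range.2 (Nat.lt_ceil.2
      (by linarith [mem_Iic.1 h])))) _

lemma tsum_rpow_neg_nat_add_le {s : ℝ} (hs : 1 < s) {N : ℕ} (hN : 0 < N) :
    ∑' n : ℕ, ((n + N + 1 : ℕ) : ℝ) ^ (-s) ≤ (N : ℝ) ^ (1 - s) / (s - 1) := by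
  have hN' : (0 : ℝ) < N := by exact_mod_cast hN
  have anti : AntitoneOn (fun x : ℝ => x ^ (-s)) (Ici (N : ℝ)) := fun x hx y _ hxy =>
    rpow_le_rpow_of_nonpos (hN'.trans_le hx) hxy (by linarith)
  have h := anti.tsum_comp_add_le_integral N (integrableOn_Ioi_rpow_of_lt (by linarith) hN')
    (fun t ht => rpow_nonneg (hN'.trans ht).le _)
  rw [integral_Ioi_rpow_of_lt (by linarith) hN'] at h
  convert h using 1
  rw [show -s + 1 = 1 - s by ring, neg_div, ← div_neg, neg_sub]

lemma tsum_indicator_Ioi_rpow_neg_le {s w : ℝ} (hs : 1 < s) (hw : 1 ≤ w) :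
    ∑' n : ℕ, (Ioi w).indicator (· ^ (-s)) ((n : ℝ) + 1) ≤ 2 ^ (s - 1) / (s - 1) * w ^ (1 - s) := by
  set N := ⌊w⌋₊
  have hN : 0 < N := Nat.floor_pos.2 hw
  have hNw : w / 2 ≤ N := by
    have := Nat.lt_floor_add_one w
    have : (1 : ℝ) ≤ N := by exact_mod_cast hN
    linarith
  have hsum := summable_indicator_rpow_neg_nat_add_one hs (Ioi w)
  rw [← hsum.sum_add_tsum_nat_add N, Finset.sum_eq_zero fun n hn => indicator_of_notMem ?_ _,
    zero_add]
  · calc ∑' n : ℕ, (Ioi w).indicator (· ^ (-s)) (((n + N : ℕ) : ℝ) + 1)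
        ≤ ∑' n : ℕ, ((n + N + 1 : ℕ) : ℝ) ^ (-s) := by
          refine ((summable_nat_add_iff N).2 hsum).tsum_le_tsum (fun n => ?_) ?_
          · push_cast
            exact indicator_apply_le' (fun _ => le_rfl) (fun _ => rpow_nonneg (by positivity) _)
          · exact_mod_cast (summable_nat_add_iff (N + 1)).2
              (summable_nat_rpow.2 (by linarith : -s < -1))
      _ ≤ (N : ℝ) ^ (1 - s) / (s - 1) := tsum_rpow_neg_nat_add_le hs hN
      _ ≤ (w / 2) ^ (1 - s) / (s - 1) :=
          div_le_div_of_nonneg_right (rpow_le_rpow_of_nonpos (by positivity) hNw (by linarith))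
            (by linarith)
      _ = 2 ^ (s - 1) / (s - 1) * w ^ (1 - s) := by
          rw [div_rpow (by linarith) zero_le_two, div_eq_mul_inv (w ^ _), ← rpow_neg zero_le_two,
            neg_sub]
          ring
  · have : (n : ℝ) + 1 ≤ N := by exact_mod_cast Finset.mem_range.1 hn
    exact fun h => (mem_Ioi.1 h).not_ge (this.trans (Nat.floor_le (by linarith)))

noncomputable def bracket (x : ℝ) : ℝ := max 1 |x|

lemma one_le_bracket (x : ℝ) : 1 ≤ bracket x := le_max_left _ _

lemma bracket_pos (x : ℝ) : 0 < bracket x := one_pos.trans_le (one_le_bracket x)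

lemma bracket_neg (x : ℝ) : bracket (-x) = bracket x := by rw [bracket, bracket, abs_neg]

lemma bracket_add_le (x y : ℝ) : bracket (x + y) ≤ bracket x + bracket y :=
  max_le (by linarith [one_le_bracket x, one_le_bracket y])
    ((abs_add_le x y).trans (add_le_add (le_max_right _ _) (le_max_right _ _)))

lemma hasSum_int_bracket {g : ℝ → ℝ} (hg : Summable fun n : ℕ => g ((n : ℝ) + 1)) :
    HasSum (fun k : ℤ => g (bracket k)) (g 1 + 2 * ∑' n : ℕ, g ((n : ℝ) + 1)) := by
  have hn : ∀ n : ℕ, bracket ((n : ℝ) + 1) = n + 1 := fun n => by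
    rw [bracket, abs_of_nonneg (by positivity), max_eq_right (by simp)]
  have h := HasSum.of_add_one_of_neg_add_one (f := fun k : ℤ => g (bracket k))
    (m := ∑' n : ℕ, g ((n : ℝ) + 1)) (m' := ∑' n : ℕ, g ((n : ℝ) + 1))
    (by simpa [hn] using hg.hasSum)
    (by simpa only [Int.cast_neg, Int.cast_add, Int.cast_natCast, Int.cast_one, bracket_neg, hn]
      using hg.hasSum)
  convert h using 1
  simp [bracket]
  ring

lemma summable_int_bracket_rpow_neg {s : ℝ} (hs : 1 < s) :
    Summable fun k : ℤ => bracket k ^ (-s) :=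
  (hasSum_int_bracket (g := (· ^ (-s))) (summable_nat_add_one_rpow_neg hs)).summable

lemma summable_int_indicator_Iic_bracket (f : ℝ → ℝ) (w : ℝ) :
    Summable fun k : ℤ => (Iic w).indicator f (bracket k) :=
  (hasSum_int_bracket (summable_indicator_Iic_nat_add_one f w)).summable

lemma summable_int_indicator_rpow_neg_bracket {s : ℝ} (hs : 1 < s) (S : Set ℝ) :
    Summable fun k : ℤ => S.indicator (· ^ (-s)) (bracket k) :=
  (hasSum_int_bracket (summable_indicator_rpow_neg_nat_add_one hs S)).summable

lemma tsum_int_indicator_Iic_bracket_le {s w : ℝ} (hs0 : 0 < s) (hs1 : s < 1) (hw : 1 ≤ w) :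
    ∑' k : ℤ, (Iic w).indicator (· ^ (-s)) (bracket k) ≤ (1 + 2 / (1 - s)) * w ^ (1 - s) := by
  have hsum := summable_indicator_Iic_nat_add_one (· ^ (-s)) w
  have hnat :=
    hsum.tsum_le_of_sum_range_le (sum_range_indicator_Iic_rpow_neg_le hs0 hs1 (by linarith))
  have hone : 1 ≤ w ^ (1 - s) := one_le_rpow hw (by linarith)
  rw [(hasSum_int_bracket hsum).tsum_eq, indicator_of_mem (mem_Iic.2 hw), one_rpow]
  calc 1 + 2 * ∑' n : ℕ, (Iic w).indicator (· ^ (-s)) ((n : ℝ) + 1)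
      ≤ w ^ (1 - s) + 2 * (w ^ (1 - s) / (1 - s)) := by linarith
    _ = (1 + 2 / (1 - s)) * w ^ (1 - s) := by ring

lemma tsum_int_indicator_Iic_bracket_antitone {s s' : ℝ} (hss' : s' ≤ s) (w : ℝ) :
    ∑' k : ℤ, (Iic w).indicator (· ^ (-s)) (bracket k)
      ≤ ∑' k : ℤ, (Iic w).indicator (· ^ (-s')) (bracket k) :=
  (summable_int_indicator_Iic_bracket (· ^ (-s)) w).tsum_le_tsum
    (fun k => indicator_le_indicator (rpow_le_rpow_of_exponent_le (one_le_bracket k) (by linarith)))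
    (summable_int_indicator_Iic_bracket (· ^ (-s')) w)

lemma exists_tsum_int_indicator_Iic_bracket_le {s r : ℝ} (hs : 0 < s) (hr : 0 ≤ r)
    (hsr : 1 - s ≤ r) (hs1 : s = 1 → 0 < r) :
    ∃ C, ∀ w, 1 ≤ w → ∑' k : ℤ, (Iic w).indicator (· ^ (-s)) (bracket k) ≤ C * w ^ r := by
  rcases lt_trichotomy s 1 with hlt | rfl | hgt
  · refine ⟨1 + 2 / (1 - s), fun w hw => (tsum_int_indicator_Iic_bracket_le hs hlt hw).trans ?_⟩
    have : 0 < 1 - s := by linarith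
    gcongr
  · -- compare with an exponent `s' < 1` close enough to `1`
    set s' := max (1 - r) (1 / 2)
    have hs'1 : s' < 1 := max_lt (by linarith [hs1 rfl]) (by norm_num)
    refine ⟨1 + 2 / (1 - s'), fun w hw => ?_⟩
    calc _ ≤ ∑' k : ℤ, (Iic w).indicator (· ^ (-s')) (bracket k) :=
          tsum_int_indicator_Iic_bracket_antitone hs'1.le w
      _ ≤ (1 + 2 / (1 - s')) * w ^ (1 - s') :=
          tsum_int_indicator_Iic_bracket_le (by positivity) hs'1 hw
      _ ≤ (1 + 2 / (1 - s')) * w ^ r := by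
          have : 0 < 1 - s' := by linarith
          gcongr
          linarith [le_max_left (1 - r) (1 / 2)]
  · refine ⟨∑' k : ℤ, bracket k ^ (-s), fun w hw => ?_⟩
    calc _ ≤ ∑' k : ℤ, bracket k ^ (-s) := by
          refine (summable_int_indicator_Iic_bracket (· ^ (-s)) w).tsum_le_tsum (fun k => ?_)
            (summable_int_bracket_rpow_neg hgt)
          exact indicator_apply_le' (fun _ => le_rfl) fun _ => rpow_nonneg (bracket_pos k).le _
      _ ≤ (∑' k : ℤ, bracket k ^ (-s)) * w ^ r :=
          le_mul_of_one_le_right (tsum_nonneg fun k => rpow_nonneg (bracket_pos k).le _)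
            (one_le_rpow hw hr)

lemma tsum_int_indicator_Ioi_bracket_le {s w : ℝ} (hs : 1 < s) (hw : 1 ≤ w) :
    ∑' k : ℤ, (Ioi w).indicator (· ^ (-s)) (bracket k)
      ≤ 2 * (2 ^ (s - 1) / (s - 1)) * w ^ (1 - s) := by
  rw [(hasSum_int_bracket (summable_indicator_rpow_neg_nat_add_one hs (Ioi w))).tsum_eq,
    indicator_of_notMem (fun h => (mem_Ioi.1 h).not_ge hw), zero_add, mul_assoc]
  exact mul_le_mul_of_nonneg_left (tsum_indicator_Ioi_rpow_neg_le hs hw) zero_le_two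

noncomputable def majorant (α β w u : ℝ) : ℝ :=
  2 ^ β * w ^ (-β) * (Iic w).indicator (· ^ (-α)) u + (Ioi w).indicator (· ^ (-(α + β))) u

lemma majorant_nonneg (α β : ℝ) {w u : ℝ} (hw : 0 ≤ w) (hu : 0 ≤ u) :
    0 ≤ majorant α β w u :=
  add_nonneg
    (mul_nonneg (by positivity) (indicator_apply_nonneg fun _ => rpow_nonneg hu _))
    (indicator_apply_nonneg fun _ => rpow_nonneg hu _)

lemma rpow_neg_mul_rpow_neg_le_majorant_of_le {α β u v w : ℝ} (hβ : 0 ≤ β)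
    (hu : 0 < u) (huv : u ≤ v) (hw : 0 < w) (hwv : w ≤ 2 * v) :
    u ^ (-α) * v ^ (-β) ≤ majorant α β w u := by
  unfold majorant
  by_cases huw : u ≤ w
  · rw [indicator_of_mem (mem_Iic.2 huw),
      indicator_of_notMem (fun h => not_lt.2 huw (mem_Ioi.1 h)), add_zero, mul_comm]
    gcongr
    calc v ^ (-β) ≤ (w / 2) ^ (-β) :=
          rpow_le_rpow_of_nonpos (by positivity) (by linarith) (by linarith)
      _ = 2 ^ β * w ^ (-β) := by
        rw [div_rpow hw.le zero_le_two, rpow_neg zero_le_two, div_inv_eq_mul, mul_comm]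
  · rw [indicator_of_notMem (fun h => huw (mem_Iic.1 h)),
      indicator_of_mem (mem_Ioi.2 (not_le.1 huw)), mul_zero, zero_add, neg_add, rpow_add hu]
    exact mul_le_mul_of_nonneg_left (rpow_le_rpow_of_nonpos hu huv (by linarith))
      (rpow_nonneg hu.le _)

lemma rpow_neg_mul_rpow_neg_le_majorant {α β u v w : ℝ} (hα : 0 ≤ α) (hβ : 0 ≤ β)
    (hu : 0 < u) (hv : 0 < v) (hw : 0 < w) (huvw : w ≤ u + v) :
    u ^ (-α) * v ^ (-β) ≤ majorant α β w u + majorant β α w v := by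
  rcases le_total u v with huv | hvu
  · exact le_add_of_le_of_nonneg
      (rpow_neg_mul_rpow_neg_le_majorant_of_le hβ hu huv hw (by linarith))
      (majorant_nonneg β α hw.le hv.le)
  · rw [mul_comm]
    exact le_add_of_nonneg_of_le (majorant_nonneg α β hw.le hu.le)
      (rpow_neg_mul_rpow_neg_le_majorant_of_le hα hv hvu hw (by linarith))

lemma summable_int_majorant {α β : ℝ} (hαβ : 1 < α + β) (w : ℝ) :
    Summable fun k : ℤ => majorant α β w (bracket k) := by
  unfold majorant
  exact ((summable_int_indicator_Iic_bracket (· ^ (-α)) w).mul_left _).add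
    (summable_int_indicator_rpow_neg_bracket hαβ (Ioi w))

lemma tsum_int_rpow_neg_mul_le_majorant {α β : ℝ} (hα : 0 ≤ α) (hβ : 0 ≤ β) (hαβ : 1 < α + β)
    (a : ℤ) :
    ∑' k : ℤ, bracket k ^ (-α) * bracket (a - k) ^ (-β)
      ≤ ∑' k : ℤ, majorant α β (bracket a) (bracket k)
        + ∑' k : ℤ, majorant β α (bracket a) (bracket k) := by
  set w := bracket a
  have hshift : ∀ g : ℝ → ℝ, ∑' k : ℤ, g (bracket (a - k)) = ∑' k : ℤ, g (bracket k) := by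
    intro g
    have h := (Equiv.subLeft a).tsum_eq (fun k : ℤ => g (bracket k))
    simp only [Equiv.subLeft_apply, Int.cast_sub] at h
    exact h
  have hM₁ := summable_int_majorant hαβ w
  have hM₂ := (Equiv.subLeft a).summable_iff.2 (summable_int_majorant (α := β) (β := α)
    (by linarith) w)
  simp only [Function.comp_def, Equiv.subLeft_apply, Int.cast_sub] at hM₂
  have hpt : ∀ k : ℤ, bracket k ^ (-α) * bracket (a - k) ^ (-β)
      ≤ majorant α β w (bracket k) + majorant β α w (bracket (a - k)) := fun k =>
    rpow_neg_mul_rpow_neg_le_majorant hα hβ (bracket_pos _) (bracket_pos _) (bracket_pos _)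
      (by simpa using bracket_add_le k (a - k))
  calc _ ≤ ∑' k : ℤ, (majorant α β w (bracket k) + majorant β α w (bracket (a - k))) :=
        (Summable.of_nonneg_of_le (fun k => mul_nonneg (rpow_nonneg (bracket_pos _).le _)
          (rpow_nonneg (bracket_pos _).le _)) hpt (hM₁.add hM₂)).tsum_le_tsum hpt (hM₁.add hM₂)
    _ = _ := by rw [hM₁.tsum_add hM₂, hshift]

lemma rpow_mul_tsum_int_majorant_le {α β γ C w : ℝ} (hαβ : 1 < α + β) (hγ : γ ≤ α + β - 1)
    (hw : 1 ≤ w) (hnear : ∑' k : ℤ, (Iic w).indicator (· ^ (-α)) (bracket k) ≤ C * w ^ (β - γ)) :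
    w ^ γ * ∑' k : ℤ, majorant α β w (bracket k)
      ≤ 2 ^ β * C + 2 * (2 ^ (α + β - 1) / (α + β - 1)) := by
  have hw0 : 0 < w := by linarith
  have htail := tsum_int_indicator_Ioi_bracket_le hαβ hw
  have hB : 0 ≤ 2 * (2 ^ (α + β - 1) / (α + β - 1)) := by
    have : 0 < α + β - 1 := by linarith
    positivity
  unfold majorant
  rw [((summable_int_indicator_Iic_bracket (· ^ (-α)) w).mul_left _).tsum_add
    (summable_int_indicator_rpow_neg_bracket hαβ _), tsum_mul_left]
  calc w ^ γ * (2 ^ β * w ^ (-β) * ∑' k : ℤ, (Iic w).indicator (· ^ (-α)) (bracket k)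
        + ∑' k : ℤ, (Ioi w).indicator (· ^ (-(α + β))) (bracket k))
      ≤ w ^ γ * (2 ^ β * w ^ (-β) * (C * w ^ (β - γ))
        + 2 * (2 ^ (α + β - 1) / (α + β - 1)) * w ^ (1 - (α + β))) := by gcongr
    _ = 2 ^ β * C * w ^ (γ + -β + (β - γ))
        + 2 * (2 ^ (α + β - 1) / (α + β - 1)) * w ^ (γ + (1 - (α + β))) := by
      rw [rpow_add hw0, rpow_add hw0, rpow_add hw0]; ring
    _ ≤ 2 ^ β * C + 2 * (2 ^ (α + β - 1) / (α + β - 1)) := by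
      rw [show γ + -β + (β - γ) = 0 by ring, rpow_zero, mul_one]
      linarith [mul_le_of_le_one_right hB
        (rpow_le_one_of_one_le_of_nonpos hw (by linarith : γ + (1 - (α + β)) ≤ 0))]

theorem exists_rpow_mul_tsum_int_rpow_neg_mul_le {α β γ : ℝ} (hα : 0 < α) (hβ : 0 < β)
    (hαβ : 1 < α + β) (hγ : γ ≤ α + β - 1) (hγα : γ ≤ α) (hγβ : γ ≤ β)
    (hα1 : α = 1 → γ < β) (hβ1 : β = 1 → γ < α) :
    ∃ C, ∀ a : ℤ, bracket a ^ γ * ∑' k : ℤ, bracket k ^ (-α) * bracket (a - k) ^ (-β) ≤ C := by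
  obtain ⟨Cα, hCα⟩ := exists_tsum_int_indicator_Iic_bracket_le (r := β - γ) hα (by linarith)
    (by linarith) (fun h => by linarith [hα1 h])
  obtain ⟨Cβ, hCβ⟩ := exists_tsum_int_indicator_Iic_bracket_le (r := α - γ) hβ (by linarith)
    (by linarith) (fun h => by linarith [hβ1 h])
  refine ⟨2 ^ β * Cα + 2 * (2 ^ (α + β - 1) / (α + β - 1))
    + (2 ^ α * Cβ + 2 * (2 ^ (β + α - 1) / (β + α - 1))), fun a => ?_⟩
  have hw := one_le_bracket a
  calc _ ≤ bracket a ^ γ * (∑' k : ℤ, majorant α β (bracket a) (bracket k)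
        + ∑' k : ℤ, majorant β α (bracket a) (bracket k)) :=
        mul_le_mul_of_nonneg_left (tsum_int_rpow_neg_mul_le_majorant hα.le hβ.le hαβ a)
          (rpow_nonneg (bracket_pos a).le _)
    _ ≤ _ := by
      rw [mul_add]
      exact add_le_add (rpow_mul_tsum_int_majorant_le hαβ hγ hw (hCα _ hw))
        (rpow_mul_tsum_int_majorant_le (by linarith) (by linarith) hw (hCβ _ hw))

lemma exponent_bounds_of_regime {α β γ : ℝ} (hα : 0 < α) (hβ : 0 < β)
    (h : (max α β < 1 ∧ 1 < α + β ∧ γ = α + β - 1)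
        ∨ (1 < max α β ∧ γ = min α β)
        ∨ (max α β = 1 ∧ 0 < min α β ∧ γ < min α β)) :
    1 < α + β ∧ γ ≤ α + β - 1 ∧ γ ≤ α ∧ γ ≤ β ∧ (α = 1 → γ < β) ∧ (β = 1 → γ < α) := by
  rcases le_total α β with hab | hba
  · rw [max_eq_right hab, min_eq_left hab] at h
    rcases h with ⟨_, _, _⟩ | ⟨_, _⟩ | ⟨_, _, _⟩ <;>
      exact ⟨by linarith, by linarith, by linarith, by linarith, fun _ => by linarith,
        fun _ => by linarith⟩
  · rw [max_eq_left hba, min_eq_right hba] at h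
    rcases h with ⟨_, _, _⟩ | ⟨_, _⟩ | ⟨_, _, _⟩ <;>
      exact ⟨by linarith, by linarith, by linarith, by linarith, fun _ => by linarith,
        fun _ => by linarith⟩

end ConvolutionBound

open ConvolutionBound

theorem stmt_12_general (α β γ : ℝ) (hα : 0 < α) (hβ : 0 < β)
    (h : (max α β < 1 ∧ 1 < α + β ∧ γ = α + β - 1)
        ∨ (1 < max α β ∧ γ = min α β)
        ∨ (max α β = 1 ∧ 0 < min α β ∧ γ < min α β)) :
    ∃ C : ℝ, ∀ a : ℤ,
      (max 1 |(a : ℝ)|) ^ γ *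
        ∑' k : ℤ, 1 / ((max 1 |(k : ℝ)|) ^ α * (max 1 |(a : ℝ) - (k : ℝ)|) ^ β)
      ≤ C := by
  obtain ⟨hαβ, hγ, hγα, hγβ, hα1, hβ1⟩ := exponent_bounds_of_regime hα hβ h
  obtain ⟨C, hC⟩ := exists_rpow_mul_tsum_int_rpow_neg_mul_le hα hβ hαβ hγ hγα hγβ hα1 hβ1
  refine ⟨C, fun a => (le_of_eq ?_).trans (hC a)⟩
  congr 1
  refine tsum_congr fun k => ?_
  rw [rpow_neg (bracket_pos _).le, rpow_neg (bracket_pos _).le, one_div, mul_inv]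
  rfl

/-- Convolution-type summability: `sup_{a ∈ ℤ} (1 ∨ |a|)^γ ∑_k (1 ∨ |k|)^{-α} (1 ∨ |a-k|)^{-β}`
is finite in each of the three regimes for `(α, β, γ)`. -/
theorem stmt_12 (α β γ : ℝ) (hα : 0 < α) (hβ : 0 < β) (hγ : 0 < γ)
    (h : (max α β < 1 ∧ 1 < α + β ∧ γ = α + β - 1)
        ∨ (1 < max α β ∧ γ = min α β)
        ∨ (max α β = 1 ∧ 0 < min α β ∧ γ < min α β)) :
    ∃ C : ℝ, ∀ a : ℤ,
      (max 1 |(a : ℝ)|) ^ γ *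
        ∑' k : ℤ, 1 / ((max 1 |(k : ℝ)|) ^ α * (max 1 |(a : ℝ) - (k : ℝ)|) ^ β)
      ≤ C :=
  stmt_12_general α β γ hα hβ h
end

section
/- For all κ ∈ (0,1), all integers k, m and all δ > 0, setting g_k(δ) = (e^{ikδ} − 1)/k for k ≠ 0, one has |g_k(δ) − g_m(δ)| ≤ C·δ^{2−2κ}·|k−m|^{1−κ}·(1/|k| + 1/|m|)^κ for a universal constant C, for all nonzero integers k, m. -/
/-!
Writing `g_a(δ) = (e^{iaδ} - 1)/a = i ∫₀^δ e^{iat} dt` and using `|e^{iat} - e^{ibt}| ≤ |a - b| t`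
gives `|g_k(δ) - g_m(δ)| ≤ |k - m| δ² / 2`, while trivially `|g_k(δ) - g_m(δ)| ≤ 2 (1/|k| + 1/|m|)`.
A quantity bounded by both `X` and `Y` is bounded by `X^{1-κ} Y^κ`, which gives the claim with `C = 2`.
-/

open Complex

lemma norm_exp_I_mul_sub_exp_I_mul_le (a b t : ℝ) :
    ‖exp (I * a * t) - exp (I * b * t)‖ ≤ |a - b| * |t| := by
  have hfactor : exp (I * a * t) - exp (I * b * t)
      = exp (((b * t : ℝ) : ℂ) * I) * (exp (I * ((a - b) * t : ℝ)) - 1) := by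
    rw [mul_sub, mul_one, ← Complex.exp_add]
    push_cast
    ring_nf
  rw [hfactor, norm_mul, norm_exp_ofReal_mul_I, one_mul, ← abs_mul]
  exact Real.norm_exp_I_mul_ofReal_sub_one_le

lemma exp_I_mul_sub_one_div_eq_integral {a : ℝ} (ha : a ≠ 0) (δ : ℝ) :
    (exp (I * a * δ) - 1) / a = I * ∫ t in (0 : ℝ)..δ, exp (I * a * t) := by
  have hIa : I * a ≠ 0 := mul_ne_zero I_ne_zero (ofReal_ne_zero.mpr ha)
  rw [integral_exp_mul_complex hIa, ofReal_zero, mul_zero, Complex.exp_zero]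
  field_simp

lemma norm_exp_I_mul_sub_one_div_sub_le_abs_sub_mul_sq {a b : ℝ} (ha : a ≠ 0) (hb : b ≠ 0)
    {δ : ℝ} (hδ : 0 ≤ δ) :
    ‖(exp (I * a * δ) - 1) / a - (exp (I * b * δ) - 1) / b‖ ≤ |a - b| * δ ^ 2 / 2 := by
  have hint (c : ℝ) : IntervalIntegrable (fun t : ℝ ↦ exp (I * c * t)) MeasureTheory.volume 0 δ :=
    (by fun_prop : Continuous fun t : ℝ ↦ exp (I * c * t)).intervalIntegrable _ _
  rw [exp_I_mul_sub_one_div_eq_integral ha, exp_I_mul_sub_one_div_eq_integral hb, ← mul_sub,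
    ← intervalIntegral.integral_sub (hint a) (hint b), norm_mul, norm_I, one_mul]
  calc ‖∫ t in (0 : ℝ)..δ, (exp (I * a * t) - exp (I * b * t))‖
      ≤ ∫ t in (0 : ℝ)..δ, |a - b| * t := by
        refine intervalIntegral.norm_integral_le_of_norm_le hδ
          (Filter.Eventually.of_forall fun t ht ↦ ?_)
          ((continuous_const.mul continuous_id).intervalIntegrable _ _)
        simpa [abs_of_pos ht.1] using norm_exp_I_mul_sub_exp_I_mul_le a b t
    _ = |a - b| * δ ^ 2 / 2 := by
        rw [intervalIntegral.integral_const_mul, integral_id]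
        ring

lemma norm_exp_I_mul_sub_one_div_le (a δ : ℝ) : ‖(exp (I * a * δ) - 1) / a‖ ≤ 2 / |a| := by
  rw [norm_div, norm_real, Real.norm_eq_abs]
  gcongr
  rw [show I * a * δ = ((a * δ : ℝ) : ℂ) * I by push_cast; ring]
  calc ‖exp (((a * δ : ℝ) : ℂ) * I) - 1‖ ≤ ‖exp (((a * δ : ℝ) : ℂ) * I)‖ + ‖(1 : ℂ)‖ :=
        norm_sub_le _ _
    _ = 2 := by
        rw [norm_exp_ofReal_mul_I, norm_one]
        norm_num

lemma norm_exp_I_mul_sub_one_div_sub_le_two_mul (a b δ : ℝ) :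
    ‖(exp (I * a * δ) - 1) / a - (exp (I * b * δ) - 1) / b‖ ≤ 2 * (1 / |a| + 1 / |b|) :=
  calc _ ≤ ‖(exp (I * a * δ) - 1) / a‖ + ‖(exp (I * b * δ) - 1) / b‖ := norm_sub_le _ _
    _ ≤ 2 / |a| + 2 / |b| :=
        add_le_add (norm_exp_I_mul_sub_one_div_le a δ) (norm_exp_I_mul_sub_one_div_le b δ)
    _ = 2 * (1 / |a| + 1 / |b|) := by ring

lemma le_rpow_mul_rpow_of_le_of_le {L X Y κ : ℝ} (hL : 0 ≤ L) (hX : L ≤ X) (hY : L ≤ Y)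
    (hκ₀ : 0 ≤ κ) (hκ₁ : κ ≤ 1) : L ≤ X ^ (1 - κ) * Y ^ κ :=
  calc L = L ^ (1 - κ) * L ^ κ := by
        rw [← Real.rpow_add' hL (by norm_num), sub_add_cancel, Real.rpow_one]
    _ ≤ X ^ (1 - κ) * Y ^ κ := by
        gcongr
        exact Real.rpow_nonneg (hL.trans hX) _

/-- With `g_k(δ) = (e^{ikδ} - 1)/k`, one has
`|g_k(δ) - g_m(δ)| ≤ C δ^{2-2κ} |k-m|^{1-κ} (1/|k| + 1/|m|)^κ` for all `κ ∈ (0,1)`,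
nonzero integers `k, m`, and `δ > 0`, with a universal constant `C`. -/
theorem stmt_18 :
    ∃ C : ℝ, 0 < C ∧
      ∀ κ : ℝ, κ ∈ Set.Ioo (0 : ℝ) 1 →
      ∀ k m : ℤ, k ≠ 0 → m ≠ 0 → ∀ δ : ℝ, 0 < δ →
        ‖(Complex.exp (Complex.I * (k : ℂ) * (δ : ℂ)) - 1) / (k : ℂ)
            - (Complex.exp (Complex.I * (m : ℂ) * (δ : ℂ)) - 1) / (m : ℂ)‖
          ≤ C * δ ^ (2 - 2 * κ) * |((k - m : ℤ) : ℝ)| ^ (1 - κ)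
              * (1 / |(k : ℝ)| + 1 / |(m : ℝ)|) ^ κ := by
  refine ⟨2, two_pos, ?_⟩
  rintro κ ⟨hκ₀, hκ₁⟩ k m hk hm δ hδ
  have hsmall := norm_exp_I_mul_sub_one_div_sub_le_abs_sub_mul_sq (Int.cast_ne_zero.mpr hk)
    (Int.cast_ne_zero.mpr hm) hδ.le
  have hlarge := norm_exp_I_mul_sub_one_div_sub_le_two_mul k m δ
  push_cast at hsmall hlarge ⊢
  set U := |(k : ℝ) - m|
  set S := 1 / |(k : ℝ)| + 1 / |(m : ℝ)|
  have hδ2 : (δ ^ 2) ^ (1 - κ) = δ ^ (2 - 2 * κ) := by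
    rw [← Real.rpow_natCast, ← Real.rpow_mul hδ.le]
    ring_nf
  calc _ ≤ (U * δ ^ 2) ^ (1 - κ) * (2 * S) ^ κ :=
        le_rpow_mul_rpow_of_le_of_le (norm_nonneg _) (hsmall.trans (half_le_self (by positivity)))
          hlarge hκ₀.le hκ₁.le
    _ = 2 ^ κ * (δ ^ (2 - 2 * κ) * U ^ (1 - κ) * S ^ κ) := by
        rw [Real.mul_rpow (by positivity) (by positivity),
          Real.mul_rpow (by positivity) (by positivity), hδ2]
        ring
    _ ≤ 2 * (δ ^ (2 - 2 * κ) * U ^ (1 - κ) * S ^ κ) := by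
        gcongr
        exact Real.rpow_le_self_of_one_le one_le_two hκ₁.le
    _ = _ := by ring
end
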